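/- arXiv:1810.03904 — 10 statements merged into one kernel-verified Lean document; each statement's English description precedes it below -/
import Mathlib

section
/- If G is a graph of diameter 2, then χρ(G) = n(G) − α(G) + 1. -/
open SimpleGraph

/-- A packing coloring of `G` with colors `1,…,k`: vertices with the same
color `i` are pairwise at (shortest-path) distance greater than `i`. -/
def IsPackingColoring {V : Type*} (G : SimpleGraph V) (k : ℕ) (c : V → ℕ) : Prop :=
  (∀ v, c v ∈ Finset.Icc 1 k) ∧
    ∀ u v : V, u ≠ v → c u = c v → (c u : ℕ∞) < G.edist u v

/-- The packing chromatic number `χρ(G)`. -/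
noncomputable def packingChromatic {V : Type*} (G : SimpleGraph V) : ℕ :=
  sInf {k | ∃ c : V → ℕ, IsPackingColoring G k c}

/-- The vertex-deleted subgraph `G - x`. -/
abbrev deleteVert {V : Type*} (G : SimpleGraph V) (x : V) : SimpleGraph {v : V // v ≠ x} :=
  G.induce {v : V | v ≠ x}

/-- The independence number of a graph. -/
noncomputable def indepNum {V : Type*} [Fintype V] (G : SimpleGraph V) : ℕ :=
  sSup {n | ∃ s : Finset V, s.card = n ∧ ∀ u ∈ s, ∀ v ∈ s, u ≠ v → ¬ G.Adj u v}

/-- If `diam(G) = 2` then `χρ(G) = n(G) − α(G) + 1`. -/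
theorem stmt_2 {V : Type*} [Fintype V] (G : SimpleGraph V) (hdiam : G.diam = 2) :
    packingChromatic G = Fintype.card V - _root_.indepNum G + 1 := by
  classical
  have hd0 : G.diam ≠ 0 := by omega
  have hnt : Nontrivial V := nontrivial_of_diam_ne_zero hd0
  have hed : G.ediam = 2 := by
    rw [SimpleGraph.diam, ENat.toNat_eq_iff (by norm_num : (2:ℕ) ≠ 0)] at hdiam
    simpa using hdiam
  have hle2 : ∀ u v : V, G.edist u v ≤ 2 := fun u v => hed ▸ edist_le_ediam
  have hgt1 : ∀ u v : V, u ≠ v → ¬ G.Adj u v → (1 : ℕ∞) < G.edist u v := by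
    intro u v huv hadj
    refine lt_of_le_of_ne (Order.one_le_iff_pos.mpr (edist_pos_of_ne huv)) ?_
    intro h
    exact hadj (edist_eq_one_iff_adj.mp h.symm)
  set IS : Set ℕ :=
    {n | ∃ s : Finset V, s.card = n ∧ ∀ u ∈ s, ∀ v ∈ s, u ≠ v → ¬ G.Adj u v} with hIS
  have hISne : IS.Nonempty := ⟨0, ∅, by simp⟩
  have hISbdd : BddAbove IS := by
    refine ⟨Fintype.card V, ?_⟩
    rintro n ⟨s, rfl, -⟩
    exact Finset.card_le_univ s
  have hαmem : _root_.indepNum G ∈ IS := Nat.sSup_mem hISne hISbdd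
  have hαle : ∀ n ∈ IS, n ≤ _root_.indepNum G := fun n hn => le_csSup hISbdd hn
  obtain ⟨S, hScard, hSind⟩ := hαmem
  set N := Fintype.card V with hN
  set α := _root_.indepNum G with hα
  set k := N - α + 1 with hk
  -- construct the packing coloring
  have hkmem : k ∈ {k | ∃ c : V → ℕ, IsPackingColoring G k c} := by
    set T : Finset V := Finset.univ \ S with hT
    have hTcard : T.card = N - α := by
      rw [hT, Finset.card_sdiff_of_subset (Finset.subset_univ S), hScard, Finset.card_univ]
    set e := T.equivFin with he
    refine ⟨fun v => if h : v ∈ T then (e ⟨v, h⟩ : ℕ) + 2 else 1, ?_, ?_⟩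
    · intro v
      by_cases h : v ∈ T
      · simp only [h, dif_pos]
        have : ((e ⟨v, h⟩ : Fin T.card) : ℕ) < N - α := hTcard ▸ (e ⟨v, h⟩).isLt
        simp only [Finset.mem_Icc]
        omega
      · simp [h, hk]
    · intro u v huv hc
      by_cases hu : u ∈ T <;> by_cases hv : v ∈ T <;>
        simp only [hu, hv, dif_pos, dif_neg, not_false_iff] at hc
      · exfalso
        apply huv
        have : e ⟨u, hu⟩ = e ⟨v, hv⟩ := Fin.ext (by omega)
        simpa using congrArg Subtype.val (e.injective this)
      · omega
      · omega
      · have hu' : u ∈ S := by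
          simp only [hT, Finset.mem_sdiff, Finset.mem_univ, true_and, not_not] at hu
          exact hu
        have hv' : v ∈ S := by
          simp only [hT, Finset.mem_sdiff, Finset.mem_univ, true_and, not_not] at hv
          exact hv
        have := hgt1 u v huv (hSind u hu' v hv' huv)
        simpa [hu] using this
  -- lower bound
  have hlb : ∀ j ∈ {k | ∃ c : V → ℕ, IsPackingColoring G j c}, k ≤ j := by
    rintro j ⟨c, hmem, hpack⟩
    have hj1 : 1 ≤ j := by
      obtain ⟨v⟩ := (inferInstance : Nonempty V)
      have := hmem v
      simp only [Finset.mem_Icc] at this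
      omega
    set T1 : Finset V := Finset.univ.filter (fun v => c v = 1) with hT1
    have hT1ind : T1.card ≤ α := by
      apply hαle
      refine ⟨T1, rfl, ?_⟩
      intro u hu v hv huv hadj
      simp only [hT1, Finset.mem_filter] at hu hv
      have := hpack u v huv (hu.2.trans hv.2.symm)
      rw [hu.2, edist_eq_one_iff_adj.mpr hadj] at this
      exact lt_irrefl _ this
    set T2 : Finset V := Finset.univ.filter (fun v => ¬ c v = 1) with hT2
    have hT2card : T2.card ≤ j - 1 := by
      have hmaps : ∀ v ∈ T2, c v ∈ Finset.Icc 2 j := by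
        intro v hv
        simp only [hT2, Finset.mem_filter] at hv
        have := hmem v
        simp only [Finset.mem_Icc] at this ⊢
        omega
      have hinj : ∀ u ∈ T2, ∀ v ∈ T2, c u = c v → u = v := by
        intro u hu v hv hc
        by_contra huv
        have h1 := hpack u v huv hc
        have h2 := hle2 u v
        simp only [hT2, Finset.mem_filter] at hu
        have hcu : 2 ≤ c u := by
          have := hmem u
          simp only [Finset.mem_Icc] at this
          omega
        have : (2 : ℕ∞) ≤ (c u : ℕ∞) := by exact_mod_cast hcu
        exact absurd (this.trans_lt h1) (not_lt.mpr h2)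
      calc T2.card ≤ (Finset.Icc 2 j).card := Finset.card_le_card_of_injOn c hmaps hinj
        _ = j - 1 := by rw [Nat.card_Icc]; omega
    have hsum : T1.card + T2.card = N := by
      rw [hT1, hT2, Finset.card_filter_add_card_filter_not]
      rfl
    omega
  exact le_antisymm (Nat.sInf_le hkmem) (le_csInf ⟨k, hkmem⟩ hlb)
end

section
/- If x is a leaf (degree-1 vertex) of a graph G, then χρ(G) − 1 ≤ χρ(G − x) ≤ χρ(G). -/
open SimpleGraph

/-- A walk avoiding `x` gives a walk in `G - x` of the same length. -/
lemma walk_to_delete {V : Type*} (G : SimpleGraph V) {x : V} :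
    ∀ {u v : V} (p : G.Walk u v) (hu : u ≠ x) (hv : v ≠ x), x ∉ p.support →
      ∃ q : (deleteVert G x).Walk ⟨u, hu⟩ ⟨v, hv⟩, q.length = p.length := by
  intro u v p
  induction p with
  | nil => intro hu hv _; exact ⟨SimpleGraph.Walk.nil, rfl⟩
  | @cons u w v h p ih =>
    intro hu hv hxs
    simp only [SimpleGraph.Walk.support_cons, List.mem_cons, not_or] at hxs
    have hw : w ≠ x := fun hwx => hxs.2 (hwx ▸ p.start_mem_support)
    obtain ⟨q, hq⟩ := ih hw hv hxs.2
    exact ⟨SimpleGraph.Walk.cons (by simpa using h) q, by simp [hq]⟩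

/-- Chop off the initial edge of a walk starting at `x`, landing at the unique
neighbor `y`. -/
lemma head_off {V : Type*} (G : SimpleGraph V) {x y : V}
    (hy : ∀ z, G.Adj x z → z = y) {v : V} (r : G.Walk x v) (hv : v ≠ x) :
    ∃ r' : G.Walk y v, r'.length + 1 = r.length := by
  cases r with
  | nil => exact absurd rfl hv
  | cons h q => obtain rfl := hy _ h; exact ⟨q, rfl⟩

/-- Surgery: any walk in `G` between vertices distinct from the leaf `x` can be
replaced by a walk in `G - x` of no greater length. -/
lemma surgery {V : Type*} (G : SimpleGraph V) [DecidableEq V] {x y : V}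
    (hy : ∀ z, G.Adj x z → z = y) {u v : V} (hu : u ≠ x) (hv : v ≠ x) :
    ∀ n (p : G.Walk u v), p.length ≤ n →
      ∃ q : (deleteVert G x).Walk ⟨u, hu⟩ ⟨v, hv⟩, q.length ≤ p.length := by
  intro n
  induction n with
  | zero =>
    intro p hp
    cases p with
    | nil =>
      obtain ⟨q, hq⟩ := walk_to_delete G SimpleGraph.Walk.nil hu hv (by simpa using hu.symm)
      exact ⟨q, hq.le⟩
    | cons h q => simp at hp
  | succ n ih =>
    intro p hp
    by_cases hxp : x ∈ p.support
    · have hx1 : x ∈ ((p.takeUntil x hxp).reverse).support := by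
        simp
      obtain ⟨r1, hr1⟩ := head_off G hy (p.takeUntil x hxp).reverse hu
      obtain ⟨r2, hr2⟩ := head_off G hy (p.dropUntil x hxp) hv
      have hlen : (p.takeUntil x hxp).length + (p.dropUntil x hxp).length = p.length := by
        rw [← SimpleGraph.Walk.length_append, SimpleGraph.Walk.take_spec]
      rw [SimpleGraph.Walk.length_reverse] at hr1
      obtain ⟨q, hq⟩ := ih (r1.reverse.append r2) (by
        rw [SimpleGraph.Walk.length_append, SimpleGraph.Walk.length_reverse]
        omega)
      refine ⟨q, ?_⟩
      rw [SimpleGraph.Walk.length_append, SimpleGraph.Walk.length_reverse] at hq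
      omega
    · obtain ⟨q, hq⟩ := walk_to_delete G p hu hv hxp
      exact ⟨q, hq.le⟩

/-- Deleting a leaf does not change distances between remaining vertices. -/
lemma edist_delete_eq {V : Type*} (G : SimpleGraph V) [DecidableEq V] {x y : V}
    (hy : ∀ z, G.Adj x z → z = y) (u v : {v : V // v ≠ x}) :
    (deleteVert G x).edist u v = G.edist u.1 v.1 := by
  apply le_antisymm
  · rcases eq_or_ne (G.edist u.1 v.1) ⊤ with h | h
    · exact h ▸ le_top
    · obtain ⟨p, hp⟩ := SimpleGraph.exists_walk_of_edist_ne_top h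
      obtain ⟨q, hq⟩ := surgery G hy u.2 v.2 p.length p le_rfl
      calc (deleteVert G x).edist u v ≤ q.length := SimpleGraph.edist_le q
        _ ≤ (p.length : ℕ∞) := by exact_mod_cast hq
        _ = G.edist u.1 v.1 := hp
  · rcases eq_or_ne ((deleteVert G x).edist u v) ⊤ with h | h
    · exact h ▸ le_top
    · obtain ⟨p, hp⟩ := SimpleGraph.exists_walk_of_edist_ne_top h
      have := SimpleGraph.edist_le
        (p.map (SimpleGraph.Embedding.induce {v : V | v ≠ x}).toHom)
      rwa [SimpleGraph.Walk.length_map, hp] at this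

lemma feasible_nonempty {V : Type*} [Fintype V] (G : SimpleGraph V) :
    {k | ∃ c : V → ℕ, IsPackingColoring G k c}.Nonempty := by
  refine ⟨Fintype.card V, fun v => (Fintype.equivFin V v : ℕ) + 1, ?_, ?_⟩
  · intro v
    simp only [Finset.mem_Icc]
    exact ⟨Nat.le_add_left 1 _, (Fintype.equivFin V v).is_lt⟩
  · intro u v huv hc
    have hc' : (Fintype.equivFin V u : ℕ) + 1 = (Fintype.equivFin V v : ℕ) + 1 := hc
    exact absurd ((Fintype.equivFin V).injective
      (Fin.val_injective (Nat.succ_injective hc'))) huv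

/-- If `x` is a leaf of `G`, then `χρ(G) − 1 ≤ χρ(G − x) ≤ χρ(G)`. -/
theorem stmt_3 {V : Type*} [Fintype V] (G : SimpleGraph V) [DecidableRel G.Adj]
    (x : V) (hx : G.degree x = 1) :
    packingChromatic G - 1 ≤ packingChromatic (deleteVert G x) ∧
      packingChromatic (deleteVert G x) ≤ packingChromatic G := by
  classical
  obtain ⟨y, hyF⟩ := Finset.card_eq_one.mp hx
  have hy : ∀ z, G.Adj x z → z = y := fun z hz => by
    have : z ∈ G.neighborFinset x := (SimpleGraph.mem_neighborFinset G x z).mpr hz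
    rw [hyF] at this; simpa using this
  have key := edist_delete_eq G hy
  constructor
  · -- χρ(G) - 1 ≤ χρ(G - x)
    set m := packingChromatic (deleteVert G x) with hm
    have hmem := Nat.sInf_mem (feasible_nonempty (deleteVert G x))
    rw [show sInf {k | ∃ c : {v : V // v ≠ x} → ℕ, IsPackingColoring (deleteVert G x) k c} = m
      from rfl] at hmem
    obtain ⟨c, hc1, hc2⟩ := hmem
    have : packingChromatic G ≤ m + 1 := by
      apply Nat.sInf_le
      refine ⟨fun v => if h : v = x then m + 1 else c ⟨v, h⟩, ?_, ?_⟩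
      · intro v
        by_cases h : v = x
        · simp [h]
        · have := hc1 ⟨v, h⟩
          simp only [Finset.mem_Icc] at this ⊢
          simp only [dif_neg h]
          omega
      · intro u v huv hcc
        beta_reduce at hcc ⊢
        by_cases hux : u = x
        · have hvx : v ≠ x := fun h => huv (hux.trans h.symm)
          rw [dif_pos hux, dif_neg hvx] at hcc
          have := hc1 ⟨v, hvx⟩
          simp only [Finset.mem_Icc] at this
          exact absurd hcc (by omega)
        · by_cases hvx : v = x
          · rw [dif_neg hux, dif_pos hvx] at hcc
            have := hc1 ⟨u, hux⟩
            simp only [Finset.mem_Icc] at this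
            exact absurd hcc (by omega)
          · rw [dif_neg hux, dif_neg hvx] at hcc
            have hne : (⟨u, hux⟩ : {v : V // v ≠ x}) ≠ ⟨v, hvx⟩ := by
              simp [Subtype.ext_iff, huv]
            rw [dif_neg hux, ← key ⟨u, hux⟩ ⟨v, hvx⟩]
            exact hc2 ⟨u, hux⟩ ⟨v, hvx⟩ hne hcc
    omega
  · -- χρ(G - x) ≤ χρ(G)
    have hmem := Nat.sInf_mem (feasible_nonempty G)
    rw [show sInf {k | ∃ c : V → ℕ, IsPackingColoring G k c} = packingChromatic G from rfl] at hmem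
    obtain ⟨c, hc1, hc2⟩ := hmem
    apply Nat.sInf_le
    refine ⟨fun v => c v.1, fun v => hc1 v.1, ?_⟩
    intro u v huv hcc
    have hne : u.1 ≠ v.1 := fun h => huv (Subtype.ext h)
    have := hc2 u.1 v.1 hne hcc
    calc ((c u.1 : ℕ)  : ℕ∞) < G.edist u.1 v.1 := this
      _ ≤ (deleteVert G x).edist u v := by rw [key u v]
end

section
/- For every n ≥ 2, the complete bipartite graph K_{n,n} is (n+1)-χρ-critical; that is, χρ(K_{n,n}) = n+1 and χρ(K_{n,n} − w) = n for every vertex w. -/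
open SimpleGraph

lemma one_lt_edist {V : Type*} (G : SimpleGraph V) {u v : V} (h : u ≠ v) (hna : ¬G.Adj u v) :
    (1:ℕ∞) < G.edist u v := by
  refine lt_of_le_of_ne (Order.one_le_iff_pos.mpr (G.edist_pos_of_ne h)) ?_
  intro he; exact hna (edist_eq_one_iff_adj.mp he.symm)

lemma card_le_of_packing {V : Type*} [Fintype V] [DecidableEq V] {G : SimpleGraph V}
    {k m : ℕ} {c : V → ℕ} (hc : IsPackingColoring G k c)
    (hd : ∀ u v : V, G.edist u v ≤ 2)
    (hind : ∀ s : Finset V, (∀ u ∈ s, ∀ v ∈ s, u ≠ v → ¬ G.Adj u v) → s.card ≤ m) :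
    Fintype.card V ≤ m + (k - 1) := by
  classical
  obtain ⟨hmem, hpack⟩ := hc
  have hcard : Fintype.card V =
      ∑ i ∈ Finset.Icc 1 k, (Finset.univ.filter fun v => c v = i).card := by
    rw [← Finset.card_univ]
    exact Finset.card_eq_sum_card_fiberwise fun v _ => hmem v
  rcases Nat.eq_zero_or_pos k with hk | hk
  · subst hk; simp at hcard; omega
  have hsplit : Finset.Icc 1 k = insert 1 (Finset.Icc 2 k) := by
    ext i; simp [Finset.mem_Icc, Finset.mem_insert]; omega
  rw [hsplit, Finset.sum_insert (by simp)] at hcard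
  have h1 : (Finset.univ.filter fun v => c v = 1).card ≤ m := by
    apply hind
    intro u hu v hv huv hadj
    simp only [Finset.mem_filter] at hu hv
    have := hpack u v huv (hu.2.trans hv.2.symm)
    rw [hu.2, edist_eq_one_iff_adj.mpr hadj] at this
    exact absurd this (by simp)
  have h2 : ∑ i ∈ Finset.Icc 2 k, (Finset.univ.filter fun v => c v = i).card ≤ k - 1 := by
    calc ∑ i ∈ Finset.Icc 2 k, (Finset.univ.filter fun v => c v = i).card
        ≤ ∑ i ∈ Finset.Icc 2 k, 1 := by
          apply Finset.sum_le_sum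
          intro i hi
          rw [Finset.mem_Icc] at hi
          apply Finset.card_le_one.mpr
          intro u hu v hv
          by_contra huv
          simp only [Finset.mem_filter] at hu hv
          have hlt := hpack u v huv (hu.2.trans hv.2.symm)
          rw [hu.2] at hlt
          have : (2:ℕ∞) ≤ (i:ℕ∞) := by exact_mod_cast hi.1
          exact absurd (lt_of_le_of_lt this (lt_of_lt_of_le hlt (hd u v))) (by simp)
      _ = k - 1 := by simp [Nat.card_Icc]
  omega

lemma indep_bound (n : ℕ) (s : Finset (Fin n ⊕ Fin n))
    (h : ∀ u ∈ s, ∀ v ∈ s, u ≠ v → ¬ (completeBipartiteGraph (Fin n) (Fin n)).Adj u v) :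
    s.card ≤ n := by
  classical
  by_cases hl : ∃ a, Sum.inl a ∈ s
  · obtain ⟨a, ha⟩ := hl
    have hsub : s ⊆ Finset.univ.image Sum.inl := by
      intro x hx
      rcases x with b | b
      · simp
      · exact absurd (by simp : (completeBipartiteGraph (Fin n) (Fin n)).Adj (Sum.inl a) (Sum.inr b))
          (h _ ha _ hx (by simp))
    calc s.card ≤ (Finset.univ.image (Sum.inl : Fin n → _)).card := Finset.card_le_card hsub
      _ ≤ n := by rw [Finset.card_image_of_injective _ Sum.inl_injective]; simp
  · have hsub : s ⊆ Finset.univ.image Sum.inr := by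
      intro x hx
      rcases x with b | b
      · exact absurd ⟨b, hx⟩ hl
      · simp
    calc s.card ≤ (Finset.univ.image (Sum.inr : Fin n → _)).card := Finset.card_le_card hsub
      _ ≤ n := by rw [Finset.card_image_of_injective _ Sum.inr_injective]; simp

lemma indep_bound_del (n : ℕ) (w : Fin n ⊕ Fin n) (s : Finset {v : Fin n ⊕ Fin n // v ≠ w})
    (h : ∀ u ∈ s, ∀ v ∈ s, u ≠ v →
      ¬ (deleteVert (completeBipartiteGraph (Fin n) (Fin n)) w).Adj u v) :
    s.card ≤ n := by
  classical
  rw [← Finset.card_image_of_injective s Subtype.val_injective]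
  apply indep_bound n
  intro u hu v hv huv hadj
  obtain ⟨u', hu', rfl⟩ := Finset.mem_image.mp hu
  obtain ⟨v', hv', rfl⟩ := Finset.mem_image.mp hv
  exact h u' hu' v' hv' (fun e => huv (congrArg _ e)) (by simpa [deleteVert] using hadj)

lemma edist_le_two_of_adj_adj {V : Type*} (G : SimpleGraph V) {u v m : V}
    (h1 : G.Adj u m) (h2 : G.Adj m v) : G.edist u v ≤ 2 :=
  calc G.edist u v ≤ G.edist u m + G.edist m v := G.edist_triangle
    _ ≤ 1 + 1 := add_le_add (le_of_eq (edist_eq_one_iff_adj.mpr h1))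
        (le_of_eq (edist_eq_one_iff_adj.mpr h2))
    _ = 2 := by norm_num

lemma edist_le_two_K (n : ℕ) (hn : 1 ≤ n) (u v : Fin n ⊕ Fin n) :
    (completeBipartiteGraph (Fin n) (Fin n)).edist u v ≤ 2 := by
  rcases u with a | a <;> rcases v with b | b
  · exact edist_le_two_of_adj_adj _ (m := Sum.inr ⟨0, hn⟩) (by simp) (by simp)
  · rw [edist_eq_one_iff_adj.mpr (by simp)]; norm_num
  · rw [edist_eq_one_iff_adj.mpr (by simp)]; norm_num
  · exact edist_le_two_of_adj_adj _ (m := Sum.inl ⟨0, hn⟩) (by simp) (by simp)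

lemma edist_le_two_del (n : ℕ) (hn : 2 ≤ n) (w : Fin n ⊕ Fin n)
    (u v : {v : Fin n ⊕ Fin n // v ≠ w}) :
    (deleteVert (completeBipartiteGraph (Fin n) (Fin n)) w).edist u v ≤ 2 := by
  have hnt : Nontrivial (Fin n) := Fin.nontrivial_iff_two_le.mpr hn
  obtain ⟨uv, hu⟩ := u
  obtain ⟨vv, hv⟩ := v
  rcases uv with a | a <;> rcases vv with b | b
  · obtain ⟨x, hx⟩ : ∃ x : Fin n, Sum.inr x ≠ w := by
      rcases w with w0 | w0
      · exact ⟨⟨0, by omega⟩, by simp⟩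
      · obtain ⟨x, hx⟩ := exists_ne w0
        exact ⟨x, by simpa using hx⟩
    exact edist_le_two_of_adj_adj _ (m := ⟨Sum.inr x, hx⟩) (by simp [deleteVert]) (by simp [deleteVert])
  · rw [edist_eq_one_iff_adj.mpr (by simp [deleteVert])]; norm_num
  · rw [edist_eq_one_iff_adj.mpr (by simp [deleteVert])]; norm_num
  · obtain ⟨x, hx⟩ : ∃ x : Fin n, Sum.inl x ≠ w := by
      rcases w with w0 | w0
      · obtain ⟨x, hx⟩ := exists_ne w0
        exact ⟨x, by simpa using hx⟩
      · exact ⟨⟨0, by omega⟩, by simp⟩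
    exact edist_le_two_of_adj_adj _ (m := ⟨Sum.inl x, hx⟩) (by simp [deleteVert]) (by simp [deleteVert])

lemma card_del (n : ℕ) (w : Fin n ⊕ Fin n) :
    Fintype.card {v : Fin n ⊕ Fin n // v ≠ w} = 2*n - 1 := by
  have : Fintype.card {v : Fin n ⊕ Fin n // ¬ (v = w)} =
      Fintype.card (Fin n ⊕ Fin n) - Fintype.card {v : Fin n ⊕ Fin n // v = w} :=
    Fintype.card_subtype_compl _
  simp only [Fintype.card_subtype_eq] at this
  simpa using by omega

/-- For `n ≥ 2`, the complete bipartite graph `K_{n,n}` is `(n+1)`-`χρ`-critical. -/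
theorem stmt_7 (n : ℕ) (hn : 2 ≤ n) :
    packingChromatic (completeBipartiteGraph (Fin n) (Fin n)) = n + 1 ∧
      ∀ w : Fin n ⊕ Fin n,
        packingChromatic (deleteVert (completeBipartiteGraph (Fin n) (Fin n)) w) = n := by
  classical
  constructor
  · -- χρ(K_{n,n}) = n + 1
    have hmem : (n+1) ∈ {k | ∃ c : Fin n ⊕ Fin n → ℕ,
        IsPackingColoring (completeBipartiteGraph (Fin n) (Fin n)) k c} := by
      refine ⟨Sum.elim (fun _ => 1) (fun j : Fin n => j.val + 2), ?_, ?_⟩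
      · intro v
        rcases v with a | a <;> simp [Finset.mem_Icc] <;> omega
      · intro u v huv hcc
        rcases u with a | a <;> rcases v with b | b
        · simp only [Sum.elim_inl, Nat.cast_one]
          exact one_lt_edist _ huv (by simp)
        · simp only [Sum.elim_inl, Sum.elim_inr] at hcc; omega
        · simp only [Sum.elim_inl, Sum.elim_inr] at hcc; omega
        · simp only [Sum.elim_inr] at hcc
          exact absurd (congrArg Sum.inr (Fin.ext (by omega))) huv
    refine le_antisymm (Nat.sInf_le hmem) (le_csInf ⟨_, hmem⟩ ?_)
    rintro k ⟨c, hc⟩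
    have := card_le_of_packing hc (edist_le_two_K n (by omega)) (indep_bound n)
    simp [Fintype.card_sum] at this
    omega
  · intro w
    have hlb : ∀ k ∈ {k | ∃ c : {v : Fin n ⊕ Fin n // v ≠ w} → ℕ,
        IsPackingColoring (deleteVert (completeBipartiteGraph (Fin n) (Fin n)) w) k c},
        n ≤ k := by
      rintro k ⟨c, hc⟩
      have := card_le_of_packing hc (edist_le_two_del n hn w) (indep_bound_del n w)
      rw [card_del n w] at this
      omega
    have hmem : n ∈ {k | ∃ c : {v : Fin n ⊕ Fin n // v ≠ w} → ℕ,
        IsPackingColoring (deleteVert (completeBipartiteGraph (Fin n) (Fin n)) w) k c} := by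
      rcases w with w0 | w0
      · -- delete a left vertex; color right side 1, left side 2..n
        refine ⟨fun x => Sum.elim
          (fun a : Fin n => 2 + (if a.val < w0.val then a.val else a.val - 1))
          (fun _ => 1) x.val, ?_, ?_⟩
        · rintro ⟨xv, hx⟩
          rcases xv with a | b
          · have hne : a.val ≠ w0.val := fun h => hx (by simp [Fin.ext_iff, h])
            have := a.isLt; have := w0.isLt
            simp only [Sum.elim_inl, Finset.mem_Icc]
            split_ifs <;> omega
          · simp [Finset.mem_Icc]; omega
        · rintro ⟨uv, hu⟩ ⟨vv, hv⟩ huv hcc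
          rcases uv with a | a <;> rcases vv with b | b
          · simp only [Sum.elim_inl] at hcc
            have hna : a.val ≠ w0.val := fun h => hu (by simp [Fin.ext_iff, h])
            have hnb : b.val ≠ w0.val := fun h => hv (by simp [Fin.ext_iff, h])
            have := a.isLt; have := b.isLt
            have hab : a = b := Fin.ext (by split_ifs at hcc <;> omega)
            exact absurd (Subtype.ext (congrArg Sum.inl hab)) huv
          · simp only [Sum.elim_inl, Sum.elim_inr] at hcc
            split_ifs at hcc <;> omega
          · simp only [Sum.elim_inl, Sum.elim_inr] at hcc
            split_ifs at hcc <;> omega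
          · simp only [Sum.elim_inr, Nat.cast_one]
            exact one_lt_edist _ huv (by simp [deleteVert])
      · -- delete a right vertex; color left side 1, right side 2..n
        refine ⟨fun x => Sum.elim (fun _ => 1)
          (fun a : Fin n => 2 + (if a.val < w0.val then a.val else a.val - 1)) x.val, ?_, ?_⟩
        · rintro ⟨xv, hx⟩
          rcases xv with b | a
          · simp [Finset.mem_Icc]; omega
          · have hne : a.val ≠ w0.val := fun h => hx (by simp [Fin.ext_iff, h])
            have := a.isLt; have := w0.isLt
            simp only [Sum.elim_inr, Finset.mem_Icc]
            split_ifs <;> omega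
        · rintro ⟨uv, hu⟩ ⟨vv, hv⟩ huv hcc
          rcases uv with a | a <;> rcases vv with b | b
          · simp only [Sum.elim_inl, Nat.cast_one]
            exact one_lt_edist _ huv (by simp [deleteVert])
          · simp only [Sum.elim_inl, Sum.elim_inr] at hcc
            split_ifs at hcc <;> omega
          · simp only [Sum.elim_inl, Sum.elim_inr] at hcc
            split_ifs at hcc <;> omega
          · simp only [Sum.elim_inr] at hcc
            have hna : a.val ≠ w0.val := fun h => hu (by simp [Fin.ext_iff, h])
            have hnb : b.val ≠ w0.val := fun h => hv (by simp [Fin.ext_iff, h])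
            have := a.isLt; have := b.isLt
            have hab : a = b := Fin.ext (by split_ifs at hcc <;> omega)
            exact absurd (Subtype.ext (congrArg Sum.inr hab)) huv
    exact le_antisymm (Nat.sInf_le hmem) (le_csInf ⟨_, hmem⟩ hlb)
end

section
/- For every set S = {1, s_1, ..., s_r} of positive integers with r ≥ 1 such that for every i, the sum of the s_j over j ≠ i is at least s_i − 1, there exists a χρ-critical graph G with {χρ(G) − χρ(G − x) : x ∈ V(G)} = S. -/
open SimpleGraph

namespace PackingAux

variable {V : Type*} {G : SimpleGraph V}

lemma IPC.mono {k k' : ℕ} {c : V → ℕ} (h : IsPackingColoring G k c) (hk : k ≤ k') :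
    IsPackingColoring G k' c := by
  refine ⟨fun v => ?_, h.2⟩
  have := h.1 v
  simp only [Finset.mem_Icc] at *
  omega

lemma exists_packing (V : Type*) [Fintype V] (G : SimpleGraph V) :
    ∃ c : V → ℕ, IsPackingColoring G (Fintype.card V) c := by
  refine ⟨fun v => (Fintype.equivFin V v : ℕ) + 1, fun v => ?_, fun u v huv hc => ?_⟩
  · simp only [Finset.mem_Icc]
    exact ⟨by omega, (Fintype.equivFin V v).isLt⟩
  · exfalso
    apply huv
    apply (Fintype.equivFin V).injective
    apply Fin.ext
    simpa using hc

lemma packing_nonempty (V : Type*) [Fintype V] (G : SimpleGraph V) :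
    {k | ∃ c : V → ℕ, IsPackingColoring G k c}.Nonempty :=
  ⟨_, exists_packing V G⟩

lemma exists_chrom_coloring (V : Type*) [Fintype V] (G : SimpleGraph V) :
    ∃ c : V → ℕ, IsPackingColoring G (packingChromatic G) c :=
  Nat.sInf_mem (packing_nonempty V G)

lemma chrom_le {k : ℕ} (h : ∃ c : V → ℕ, IsPackingColoring G k c) :
    packingChromatic G ≤ k := Nat.sInf_le h

lemma chrom_eq [Fintype V] {k₀ : ℕ} (hub : ∃ c : V → ℕ, IsPackingColoring G k₀ c)
    (hlb : ∀ k (c : V → ℕ), IsPackingColoring G k c → k₀ ≤ k) :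
    packingChromatic G = k₀ := by
  refine le_antisymm (chrom_le hub) (le_csInf (packing_nonempty V G) ?_)
  rintro k ⟨c, hc⟩
  exact hlb k c hc

lemma edist_cases_of_le_two {u v : V} (h : G.edist u v ≤ 2) :
    u = v ∨ G.Adj u v ∨ ∃ w, G.Adj u w ∧ G.Adj w v := by
  have hne : G.edist u v ≠ ⊤ := fun ht => by simp [ht] at h
  obtain ⟨p, hp⟩ := SimpleGraph.exists_walk_of_edist_ne_top hne
  have hlen : p.length ≤ 2 := by
    have h2 : (p.length : ℕ∞) ≤ 2 := hp ▸ h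
    exact_mod_cast h2
  cases p with
  | nil => exact Or.inl rfl
  | cons h1 q =>
    cases q with
    | nil => exact Or.inr (Or.inl h1)
    | cons h2 q2 =>
      cases q2 with
      | nil => exact Or.inr (Or.inr ⟨_, h1, h2⟩)
      | cons h3 q3 => simp [SimpleGraph.Walk.length_cons] at hlen

lemma one_lt_edist {u v : V} (hne : u ≠ v) (hnadj : ¬ G.Adj u v) : 1 < G.edist u v := by
  refine lt_of_le_of_ne (Order.one_le_iff_pos.mpr (SimpleGraph.edist_pos_of_ne hne)) ?_
  intro h
  exact hnadj (SimpleGraph.edist_eq_one_iff_adj.mp h.symm)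

lemma two_lt_edist {u v : V} (hne : u ≠ v) (hnadj : ¬ G.Adj u v)
    (hcom : ∀ w, G.Adj u w → ¬ G.Adj w v) : 2 < G.edist u v := by
  by_contra hle
  push_neg at hle
  rcases edist_cases_of_le_two hle with h | h | ⟨w, h1, h2⟩
  exacts [hne h, hnadj h, hcom w h1 h2]

lemma edist_le_one {u v : V} (h : u = v ∨ G.Adj u v) : G.edist u v ≤ 1 := by
  rcases h with rfl | h
  · simp
  · exact le_of_eq (SimpleGraph.edist_eq_one_iff_adj.mpr h)

end PackingAux
section
variable {V : Type*} {G : SimpleGraph V}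
open PackingAux in
theorem fam_packing {V : Type*} [Fintype V] [DecidableEq V] {r : ℕ} (hr : 1 ≤ r)
    (ℓ : V → Fin r × Bool) (G : SimpleGraph V)
    (hadj : ∀ u v, G.Adj u v ↔ u ≠ v ∧ ((ℓ u).1 = (ℓ v).1 ∨ ((ℓ u).2 = true ∧ (ℓ v).2 = true)))
    (hcen : ∀ i : Fin r, ∃ v, ℓ v = (i, true))
    (hcliq : ∀ i : Fin r, 2 ≤ (Finset.univ.filter fun v : V => ℓ v = (i, false)).card) :
    packingChromatic G + 2 * r = Fintype.card V + 2 := by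
  classical
  choose cen hcen' using hcen
  have hsame : ∀ u v : V, u ≠ v → (ℓ u).1 = (ℓ v).1 → G.Adj u v :=
    fun u v h1 h2 => (hadj u v).mpr ⟨h1, Or.inl h2⟩
  have hstep : ∀ u : V, G.edist u (cen (ℓ u).1) ≤ 1 := by
    intro u
    apply PackingAux.edist_le_one
    by_cases h : u = cen (ℓ u).1
    · exact Or.inl h
    · exact Or.inr (hsame _ _ h (by rw [hcen' (ℓ u).1]))
  have hcc : ∀ i j : Fin r, G.edist (cen i) (cen j) ≤ 1 := by
    intro i j
    apply PackingAux.edist_le_one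
    by_cases h : cen i = cen j
    · exact Or.inl h
    · refine Or.inr ((hadj _ _).mpr ⟨h, Or.inr ⟨?_, ?_⟩⟩) <;> rw [hcen']
  have hdiam : ∀ u v : V, G.edist u v ≤ 3 := by
    intro u v
    have e3 : G.edist (cen (ℓ v).1) v ≤ 1 := by
      rw [SimpleGraph.edist_comm]; exact hstep v
    calc G.edist u v ≤ G.edist u (cen (ℓ u).1) + G.edist (cen (ℓ u).1) v :=
          SimpleGraph.edist_triangle
      _ ≤ 1 + (G.edist (cen (ℓ u).1) (cen (ℓ v).1) + G.edist (cen (ℓ v).1) v) :=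
          add_le_add (hstep u) SimpleGraph.edist_triangle
      _ ≤ 1 + (1 + 1) := add_le_add le_rfl (add_le_add (hcc _ _) e3)
      _ = 3 := by norm_num
  -- fiber bounds
  have hfib : ∀ (k : ℕ) (c : V → ℕ), IsPackingColoring G k c → ∀ t : ℕ,
      (Finset.univ.filter fun v => c v = t).card ≤ r := by
    intro k c hc t
    have hle : (Finset.univ.filter fun v => c v = t).card ≤ (Finset.univ : Finset (Fin r)).card := by
      apply Finset.card_le_card_of_injOn (fun v => (ℓ v).1) (fun _ _ => Finset.mem_univ _)
      intro u hu v hv he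
      by_contra hne
      simp only [Finset.coe_filter, Set.mem_setOf_eq, Finset.mem_univ, true_and] at hu hv
      have hA : G.Adj u v := hsame u v hne he
      have h1 : G.edist u v ≤ 1 := PackingAux.edist_le_one (Or.inr hA)
      have hlt := hc.2 u v hne (by rw [hu, hv])
      have hlt1 : (c u : ℕ∞) < 1 := lt_of_lt_of_le hlt h1
      have hlt1' : c u < 1 := by exact_mod_cast hlt1
      have := hc.1 u
      simp only [Finset.mem_Icc] at this
      omega
    simpa using hle
  have hfib3 : ∀ (k : ℕ) (c : V → ℕ), IsPackingColoring G k c → ∀ t : ℕ, 3 ≤ t →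
      (Finset.univ.filter fun v => c v = t).card ≤ 1 := by
    intro k c hc t ht
    rw [Finset.card_le_one]
    intro u hu v hv
    by_contra hne
    simp only [Finset.mem_filter, Finset.mem_univ, true_and] at hu hv
    have hlt := hc.2 u v hne (by rw [hu, hv])
    rw [hu] at hlt
    have h3 : (3 : ℕ∞) ≤ (t : ℕ∞) := by exact_mod_cast ht
    exact absurd (hdiam u v) (not_le.mpr (lt_of_le_of_lt h3 hlt))
  -- lower bound
  have hlb : ∀ (k : ℕ) (c : V → ℕ), IsPackingColoring G k c →
      Fintype.card V + 2 ≤ k + 2 * r := by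
    intro k c hc
    obtain ⟨a, ha, b, hb, hab⟩ := Finset.one_lt_card.mp
      (lt_of_lt_of_le one_lt_two (hcliq ⟨0, hr⟩))
    simp only [Finset.mem_filter, Finset.mem_univ, true_and] at ha hb
    have hA : G.Adj a b := hsame a b hab (by rw [ha, hb])
    have hmema := hc.1 a
    have hmemb := hc.1 b
    simp only [Finset.mem_Icc] at hmema hmemb
    have hcane : c a ≠ c b := by
      intro he
      have hlt := hc.2 a b hab he
      have h1 : G.edist a b ≤ 1 := PackingAux.edist_le_one (Or.inr hA)
      have : (c a : ℕ∞) < 1 := lt_of_lt_of_le hlt h1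
      have : c a < 1 := by exact_mod_cast this
      omega
    have hk2 : 2 ≤ k := by omega
    have hcount : Fintype.card V
        = ∑ t ∈ Finset.Icc 1 k, (Finset.univ.filter fun v => c v = t).card := by
      rw [← Finset.card_univ]
      exact Finset.card_eq_sum_card_fiberwise (fun v _ => hc.1 v)
    have hsplit : Finset.Icc 1 k = insert 1 (insert 2 (Finset.Icc 3 k)) := by
      ext x
      simp only [Finset.mem_Icc, Finset.mem_insert]
      omega
    have h1n : (1 : ℕ) ∉ insert 2 (Finset.Icc 3 k) := by simp
    have h2n : (2 : ℕ) ∉ Finset.Icc 3 k := by simp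
    rw [hsplit, Finset.sum_insert h1n, Finset.sum_insert h2n] at hcount
    have hrest : ∑ t ∈ Finset.Icc 3 k, (Finset.univ.filter fun v => c v = t).card
        ≤ k - 2 := by
      calc ∑ t ∈ Finset.Icc 3 k, (Finset.univ.filter fun v => c v = t).card
          ≤ ∑ _t ∈ Finset.Icc 3 k, 1 :=
            Finset.sum_le_sum (fun t ht => hfib3 k c hc t (Finset.mem_Icc.mp ht).1)
        _ ≤ k - 2 := by
            rw [Finset.sum_const, smul_eq_mul, mul_one, Nat.card_Icc]
            omega
    have hb1 := hfib k c hc 1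
    have hb2 := hfib k c hc 2
    omega
  -- upper bound: construct coloring
  have hexists : ∀ i : Fin r, ∃ x y : V, ℓ x = (i, false) ∧ ℓ y = (i, false) ∧ x ≠ y := by
    intro i
    obtain ⟨x, hx, y, hy, hxy⟩ := Finset.one_lt_card.mp
      (lt_of_lt_of_le one_lt_two (hcliq i))
    simp only [Finset.mem_filter, Finset.mem_univ, true_and] at hx hy
    exact ⟨x, y, hx, hy, hxy⟩
  choose a d ha hd had using hexists
  set n := Fintype.card V with hn
  set g : Fin r × Bool → V := fun p => if p.2 then d p.1 else a p.1 with hg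
  have hℓg : ∀ p, ℓ (g p) = (p.1, false) := by
    intro p
    by_cases h : p.2 = true <;> simp [hg, h, ha, hd]
  have hginj : Function.Injective g := by
    intro p q hpq
    have h1 : p.1 = q.1 := by
      have h2 := congrArg (fun v => (ℓ v).1) hpq
      simpa [hℓg] using h2
    obtain ⟨i, bi⟩ := p
    obtain ⟨j, bj⟩ := q
    obtain rfl : i = j := h1
    suffices h : bi = bj by rw [h]
    by_contra hb
    cases bi <;> cases bj
    · exact hb rfl
    · exact had i (by simpa [hg] using hpq)
    · exact had i (by simpa [hg] using hpq.symm)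
    · exact hb rfl
  set D : Finset V := Finset.univ.image g with hD
  have hDcard : D.card = 2 * r := by
    rw [hD, Finset.card_image_of_injective _ hginj, Finset.card_univ]
    simp [Fintype.card_prod, mul_comm]
  set T : Finset V := Finset.univ \ D with hT
  have hDsub : D ⊆ Finset.univ := Finset.subset_univ D
  have hTcard : T.card = n - 2 * r := by
    rw [hT, Finset.card_sdiff_of_subset hDsub, Finset.card_univ, hDcard, hn]
  have h2rn : 2 * r ≤ n := by
    rw [hn, ← hDcard, ← Finset.card_univ]
    exact Finset.card_le_card hDsub
  set k₀ : ℕ := (n - 2 * r) + 2 with hk₀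
  set eT := T.equivFin with heT
  set c : V → ℕ := fun v => if hv : v ∈ T then (eT ⟨v, hv⟩ : ℕ) + 3
    else if v ∈ Finset.univ.image a then 1 else 2 with hc
  have hcT : ∀ v (hv : v ∈ T), c v = (eT ⟨v, hv⟩ : ℕ) + 3 := by
    intro v hv
    simp [hc, hv]
  have hgnotT : ∀ p, g p ∉ T := by
    intro p
    rw [hT]
    simp only [Finset.mem_sdiff, Finset.mem_univ, true_and, not_not, hD]
    exact Finset.mem_image.mpr ⟨p, Finset.mem_univ p, rfl⟩
  have hca : ∀ i, c (a i) = 1 := by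
    intro i
    have h1 : a i ∉ T := by
      have h2 := hgnotT (i, false)
      simpa [hg] using h2
    simp [hc, h1, Finset.mem_image.mpr ⟨i, Finset.mem_univ i, rfl⟩]
  have hdnotima : ∀ i, d i ∉ Finset.univ.image a := by
    intro i h
    obtain ⟨j, _, hj⟩ := Finset.mem_image.mp h
    have hℓ : ℓ (a j) = ℓ (d i) := congrArg ℓ hj
    rw [ha, hd] at hℓ
    have : j = i := by
      have := congrArg Prod.fst hℓ
      simpa using this
    subst this
    exact had j (hj ▸ rfl)
  have hcd : ∀ i, c (d i) = 2 := by
    intro i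
    have h1 : d i ∉ T := by
      have h2 := hgnotT (i, true)
      simpa [hg] using h2
    simp only [hc, dif_neg h1, if_neg (hdnotima i)]
  have hnotT_cases : ∀ v, v ∉ T → (∃ i, v = a i) ∨ (∃ i, v = d i) := by
    intro v hv
    have hvD : v ∈ D := by
      rw [hT] at hv
      simpa using hv
    obtain ⟨p, _, hp⟩ := Finset.mem_image.mp hvD
    cases hb : p.2
    · left
      exact ⟨p.1, by rw [← hp]; simp [hg, hb]⟩
    · right
      exact ⟨p.1, by rw [← hp]; simp [hg, hb]⟩
  have hc1 : ∀ v, c v = 1 → ∃ i, v = a i := by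
    intro v h
    by_cases hv : v ∈ T
    · rw [hcT v hv] at h
      omega
    · rcases hnotT_cases v hv with ⟨i, rfl⟩ | ⟨i, rfl⟩
      · exact ⟨i, rfl⟩
      · rw [hcd i] at h
        omega
  have hc2 : ∀ v, c v = 2 → ∃ i, v = d i := by
    intro v h
    by_cases hv : v ∈ T
    · rw [hcT v hv] at h
      omega
    · rcases hnotT_cases v hv with ⟨i, rfl⟩ | ⟨i, rfl⟩
      · rw [hca i] at h
        omega
      · exact ⟨i, rfl⟩
  have hmem : ∀ v, c v ∈ Finset.Icc 1 k₀ := by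
    intro v
    rw [Finset.mem_Icc]
    by_cases hv : v ∈ T
    · rw [hcT v hv]
      have hlt := (eT ⟨v, hv⟩).isLt
      omega
    · have h2 : c v = 1 ∨ c v = 2 := by
        by_cases hva : v ∈ Finset.univ.image a
        · left
          simp only [hc, dif_neg hv, if_pos hva]
        · right
          simp only [hc, dif_neg hv, if_neg hva]
      rcases h2 with h | h <;> rw [h] <;> omega
  have hvalid : IsPackingColoring G k₀ c := by
    refine ⟨hmem, fun u v huv hcc' => ?_⟩
    by_cases hu : u ∈ T
    · by_cases hv : v ∈ T
      · exfalso
        apply huv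
        rw [hcT u hu, hcT v hv] at hcc'
        have h1 : eT ⟨u, hu⟩ = eT ⟨v, hv⟩ := Fin.ext (by omega)
        have h2 := eT.injective h1
        exact congrArg Subtype.val h2
      · exfalso
        rw [hcT u hu] at hcc'
        rcases hnotT_cases v hv with ⟨i, rfl⟩ | ⟨i, rfl⟩
        · rw [hca i] at hcc'; omega
        · rw [hcd i] at hcc'; omega
    · by_cases hv : v ∈ T
      · exfalso
        rw [hcT v hv] at hcc'
        rcases hnotT_cases u hu with ⟨i, rfl⟩ | ⟨i, rfl⟩
        · rw [hca i] at hcc'; omega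
        · rw [hcd i] at hcc'; omega
      · rcases hnotT_cases u hu with ⟨i, rfl⟩ | ⟨i, rfl⟩
        · rw [hca i] at hcc' ⊢
          obtain ⟨j, rfl⟩ := hc1 v hcc'.symm
          have hij : i ≠ j := fun h => huv (by rw [h])
          have hlt : (1 : ℕ∞) < G.edist (a i) (a j) := by
            apply PackingAux.one_lt_edist huv
            intro hA
            rcases ((hadj _ _).mp hA).2 with h | h
            · rw [ha i, ha j] at h
              exact hij h
            · rw [ha i] at h
              simp at h
          exact_mod_cast hlt
        · rw [hcd i] at hcc' ⊢
          obtain ⟨j, rfl⟩ := hc2 v hcc'.symm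
          have hij : i ≠ j := fun h => huv (by rw [h])
          have hlt : (2 : ℕ∞) < G.edist (d i) (d j) := by
            apply PackingAux.two_lt_edist huv
            · intro hA
              rcases ((hadj _ _).mp hA).2 with h | h
              · rw [hd i, hd j] at h
                exact hij h
              · rw [hd i] at h
                simp at h
            · intro w hw1 hw2
              have h1 := ((hadj _ _).mp hw1).2
              have h2 := ((hadj _ _).mp hw2).2
              rcases h1 with h1 | h1
              · rcases h2 with h2 | h2
                · apply hij
                  rw [hd i] at h1
                  rw [hd j] at h2
                  exact h1.trans h2
                · rw [hd j] at h2
                  simp at h2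
              · rw [hd i] at h1
                simp at h1
          exact_mod_cast hlt
  have hfin : packingChromatic G = k₀ :=
    PackingAux.chrom_eq ⟨c, hvalid⟩ (fun k c' hc' => by have := hlb k c' hc'; omega)
  rw [hfin]
  omega
end
namespace PackingAux

variable {V : Type*} {G : SimpleGraph V}

lemma walk_stay {P : Set V} (hcross : ∀ u v : V, u ∈ P → v ∉ P → ¬ G.Adj u v)
    {u v : V} (w : G.Walk u v) :
    ∀ (hu : u ∈ P) (hv : v ∈ P),
      ∃ w' : (G.induce P).Walk ⟨u, hu⟩ ⟨v, hv⟩, w'.length = w.length := by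
  induction w with
  | nil =>
    intro hu hv
    exact ⟨SimpleGraph.Walk.nil, rfl⟩
  | @cons a b c hab q ih =>
    intro hu hv
    have hb : b ∈ P := by
      by_contra hbn
      exact hcross _ _ hu hbn hab
    obtain ⟨w', hw'⟩ := ih hb hv
    have hAdj : (G.induce P).Adj ⟨a, hu⟩ ⟨b, hb⟩ := by
      simpa using hab
    exact ⟨SimpleGraph.Walk.cons hAdj w', by simp [hw']⟩

lemma walk_end_mem {P : Set V} (hcross : ∀ u v : V, u ∈ P → v ∉ P → ¬ G.Adj u v)
    {u v : V} (w : G.Walk u v) : u ∈ P → v ∈ P := by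
  induction w with
  | nil => exact id
  | @cons a b c hab q ih =>
    intro hu
    apply ih
    by_contra hbn
    exact hcross _ _ hu hbn hab

lemma not_reachable_of_cross {P : Set V} (hcross : ∀ u v : V, u ∈ P → v ∉ P → ¬ G.Adj u v)
    {u v : V} (hu : u ∈ P) (hv : v ∉ P) : ¬ G.Reachable u v :=
  fun h => hv (h.elim fun w => walk_end_mem hcross w hu)

lemma edist_induce_ge (s : Set V) (u v : ↥s) :
    G.edist u.1 v.1 ≤ (G.induce s).edist u v := by
  by_cases h : (G.induce s).edist u v = ⊤
  · rw [h]
    exact le_top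
  · obtain ⟨p, hp⟩ := SimpleGraph.exists_walk_of_edist_ne_top h
    have hle := SimpleGraph.edist_le (p.map (SimpleGraph.Embedding.induce s).toHom)
    rw [SimpleGraph.Walk.length_map] at hle
    exact hp ▸ hle

lemma edist_induce_le {P : Set V} (hcross : ∀ u v : V, u ∈ P → v ∉ P → ¬ G.Adj u v)
    {u v : V} (hu : u ∈ P) (hv : v ∈ P) :
    (G.induce P).edist ⟨u, hu⟩ ⟨v, hv⟩ ≤ G.edist u v := by
  by_cases h : G.edist u v = ⊤
  · rw [h]
    exact le_top
  · obtain ⟨p, hp⟩ := SimpleGraph.exists_walk_of_edist_ne_top h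
    obtain ⟨w', hw'⟩ := walk_stay hcross p hu hv
    have hle := SimpleGraph.edist_le w'
    rw [hw'] at hle
    exact hp ▸ hle

theorem union_packing {V : Type*} [Fintype V] (G : SimpleGraph V) (P : Set V)
    (hcross : ∀ u v : V, u ∈ P → v ∉ P → ¬ G.Adj u v) :
    packingChromatic G
      = max (packingChromatic (G.induce P)) (packingChromatic (G.induce Pᶜ)) := by
  classical
  have hcross' : ∀ u v : V, u ∈ Pᶜ → v ∉ Pᶜ → ¬ G.Adj u v := by
    intro u v hu hv hA
    rw [Set.mem_compl_iff] at hu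
    rw [Set.notMem_compl_iff] at hv
    exact hcross v u hv hu hA.symm
  apply le_antisymm
  · obtain ⟨cA, hcA⟩ := exists_chrom_coloring _ (G.induce P)
    obtain ⟨cB, hcB⟩ := exists_chrom_coloring _ (G.induce Pᶜ)
    set m := max (packingChromatic (G.induce P)) (packingChromatic (G.induce Pᶜ)) with hm
    have hcA' : IsPackingColoring (G.induce P) m cA := IPC.mono hcA (le_max_left _ _)
    have hcB' : IsPackingColoring (G.induce Pᶜ) m cB := IPC.mono hcB (le_max_right _ _)
    apply chrom_le
    refine ⟨fun v => if h : v ∈ P then cA ⟨v, h⟩ else cB ⟨v, h⟩, fun v => ?_, ?_⟩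
    · by_cases h : v ∈ P
      · simpa [h] using hcA'.1 ⟨v, h⟩
      · simpa [h] using hcB'.1 ⟨v, h⟩
    · intro u v huv hcc
      by_cases hu : u ∈ P <;> by_cases hv : v ∈ P
      · simp only [dif_pos hu, dif_pos hv] at hcc ⊢
        have hne : (⟨u, hu⟩ : ↥P) ≠ ⟨v, hv⟩ := fun h => huv (congrArg Subtype.val h)
        exact lt_of_lt_of_le (hcA'.2 _ _ hne hcc) (edist_induce_le hcross hu hv)
      · rw [SimpleGraph.edist_eq_top_of_not_reachable (not_reachable_of_cross hcross hu hv)]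
        exact lt_of_le_of_ne le_top (WithTop.coe_ne_top)
      · rw [SimpleGraph.edist_eq_top_of_not_reachable
          (not_reachable_of_cross hcross' hu (Set.notMem_compl_iff.mpr hv))]
        exact lt_of_le_of_ne le_top (WithTop.coe_ne_top)
      · simp only [dif_neg hu, dif_neg hv] at hcc ⊢
        have hne : (⟨u, hu⟩ : ↥Pᶜ) ≠ ⟨v, hv⟩ := fun h => huv (congrArg Subtype.val h)
        exact lt_of_lt_of_le (hcB'.2 _ _ hne hcc) (edist_induce_le hcross' hu hv)
  · apply max_le
    · obtain ⟨c, hc⟩ := exists_chrom_coloring _ G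
      apply chrom_le
      refine ⟨fun u => c u.1, fun u => hc.1 _, ?_⟩
      intro x y hxy hcxy
      have hne : x.1 ≠ y.1 := fun h => hxy (Subtype.ext h)
      exact lt_of_lt_of_le (hc.2 _ _ hne hcxy) (edist_induce_ge P x y)
    · obtain ⟨c, hc⟩ := exists_chrom_coloring _ G
      apply chrom_le
      refine ⟨fun u => c u.1, fun u => hc.1 _, ?_⟩
      intro x y hxy hcxy
      have hne : x.1 ≠ y.1 := fun h => hxy (Subtype.ext h)
      exact lt_of_lt_of_le (hc.2 _ _ hne hcxy) (edist_induce_ge Pᶜ x y)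

end PackingAux

open PackingAux in
/-- For every finite set `S = {1, s₁, …, s_r}` of positive integers (`r ≥ 1`)
such that `∑_{j ≠ i} s_j ≥ s_i − 1` for every `i`, there is a `χρ`-critical
graph `G` with `{χρ(G) − χρ(G − x) : x ∈ V(G)} = S`. -/
theorem stmt_10 (S : Finset ℕ) (hpos : ∀ n ∈ S, 1 ≤ n) (h1 : 1 ∈ S)
    (hcard : 2 ≤ S.card)
    (hsum : ∀ s ∈ S.erase 1, s - 1 ≤ ∑ t ∈ (S.erase 1).erase s, t) :
    ∃ (n : ℕ) (G : SimpleGraph (Fin n)),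
      (∀ x : Fin n, packingChromatic (deleteVert G x) < packingChromatic G) ∧
      {d : ℕ | ∃ x : Fin n,
        packingChromatic G - packingChromatic (deleteVert G x) = d} = ↑S := by
  classical
  set E := S.erase 1 with hE
  have hE2 : ∀ t ∈ E, 2 ≤ t := by
    intro t ht
    obtain ⟨ht1, htS⟩ := Finset.mem_erase.mp ht
    have := hpos t htS
    omega
  have hr2 : 2 ≤ E.card := by
    by_contra hcon
    have hEcard : 1 ≤ E.card := by
      have h := Finset.card_erase_of_mem h1
      rw [← hE] at h
      omega
    have h1' : E.card = 1 := by omega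
    obtain ⟨t, ht⟩ := Finset.card_eq_one.mp h1'
    have htE : t ∈ E := by rw [ht]; exact Finset.mem_singleton_self t
    have hsum' := hsum t htE
    rw [ht, Finset.erase_singleton, Finset.sum_empty] at hsum'
    have h2 := hE2 t htE
    omega
  obtain ⟨r', hr'⟩ : ∃ r', E.card = r' + 1 := ⟨E.card - 1, by omega⟩
  have hr1 : 1 ≤ r' := by omega
  set φ := Finset.equivFinOfCardEq hr' with hφ
  set s : Fin (r' + 1) → ℕ := fun i => ((φ.symm i : ↥E) : ℕ) with hs
  have hsE : ∀ i, s i ∈ E := fun i => (φ.symm i).2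
  have hsInj : Function.Injective s := fun i j hij => φ.symm.injective (Subtype.ext hij)
  have hsSurj : ∀ t ∈ E, ∃ i, s i = t := by
    intro t ht
    refine ⟨φ ⟨t, ht⟩, ?_⟩
    rw [hs]
    simp
  have hs2 : ∀ i, 2 ≤ s i := fun i => hE2 _ (hsE i)
  have hsumErase : ∀ i, ∑ j ∈ Finset.univ.erase i, s j = ∑ t ∈ E.erase (s i), t := by
    intro i
    have himg : (Finset.univ.erase i).image s = E.erase (s i) := by
      ext t
      simp only [Finset.mem_image, Finset.mem_erase, Finset.mem_univ, and_true]
      constructor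
      · rintro ⟨j, hj, rfl⟩
        exact ⟨fun h => hj (hsInj h), hsE j⟩
      · rintro ⟨ht1, ht2⟩
        obtain ⟨j, rfl⟩ := hsSurj t ht2
        exact ⟨j, fun h => ht1 (by rw [h]), rfl⟩
    rw [← himg, Finset.sum_image (fun x _ y _ h => hsInj h)]
  have hkey : ∀ i, s i ≤ ∑ j ∈ Finset.univ.erase i, s j + 1 := by
    intro i
    have h := hsum (s i) (hsE i)
    rw [← hsumErase i] at h
    have := hs2 i
    omega
  have htotal : ∀ i : Fin (r' + 1), ∑ j, s j = s i + ∑ j ∈ Finset.univ.erase i, s j :=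
    fun i => (Finset.add_sum_erase _ s (Finset.mem_univ i)).symm
  set q : Fin (r' + 1) → ℕ := fun i => s i + 1 with hq
  have hqi : ∀ i, q i = s i + 1 := fun _ => rfl
  have hq3 : ∀ i, 3 ≤ q i := by
    intro i
    have := hs2 i
    rw [hqi]
    omega
  set n := (r' + 1) + ∑ i, q i with hn
  have hsumq : ∑ i, q i = ∑ i, s i + (r' + 1) := by
    rw [Finset.sum_add_distrib]
    simp
  have hA2 : 2 * (r' + 1) ≤ ∑ i, s i := by
    calc 2 * (r' + 1) = ∑ _i : Fin (r' + 1), 2 := by simp [mul_comm]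
    _ ≤ ∑ i, s i := Finset.sum_le_sum (fun i _ => hs2 i)
  have hcardW : Fintype.card ((Fin (r' + 1)) ⊕ ((i : Fin (r' + 1)) × Fin (q i))) = n := by
    simp [hn]
  set e : Fin n ≃ (Fin (r' + 1)) ⊕ ((i : Fin (r' + 1)) × Fin (q i)) :=
    (Fintype.equivFinOfCardEq hcardW).symm with he
  set ℓ : Fin n → Fin (r' + 1) × Bool :=
    fun v => Sum.elim (fun i => (i, true)) (fun p => (p.1, false)) (e v) with hℓ
  have hℓdef : ∀ v, ℓ v = Sum.elim (fun i => (i, true)) (fun p => (p.1, false)) (e v) :=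
    fun _ => rfl
  set G : SimpleGraph (Fin n) :=
    { Adj := fun u v => u ≠ v ∧ ((ℓ u).1 = (ℓ v).1 ∨ ((ℓ u).2 = true ∧ (ℓ v).2 = true)),
      symm := by
        constructor
        intro u v h
        refine ⟨h.1.symm, ?_⟩
        rcases h.2 with h2 | h2
        · exact Or.inl h2.symm
        · exact Or.inr ⟨h2.2, h2.1⟩
      loopless := ⟨fun v h => h.1 rfl⟩ } with hG
  have hadj : ∀ u v, G.Adj u v ↔
      u ≠ v ∧ ((ℓ u).1 = (ℓ v).1 ∨ ((ℓ u).2 = true ∧ (ℓ v).2 = true)) := fun u v => Iff.rfl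
  set xc : Fin (r' + 1) → Fin n := fun i => e.symm (Sum.inl i) with hxc
  have hℓxc : ∀ i, ℓ (xc i) = (i, true) := by
    intro i
    rw [hℓdef, hxc]
    simp
  have hcenu : ∀ v i, ℓ v = (i, true) → v = xc i := by
    intro v i hv
    rw [hℓdef] at hv
    rcases hev : e v with j | p
    · rw [hev] at hv
      simp only [Sum.elim_inl, Prod.mk.injEq] at hv
      apply e.injective
      rw [hxc]
      simp [hev, hv.1]
    · rw [hev] at hv
      simp at hv
  have hfiber : ∀ i, (Finset.univ.filter fun v : Fin n => ℓ v = (i, false))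
      = Finset.univ.image (fun t : Fin (q i) => e.symm (Sum.inr ⟨i, t⟩)) := by
    intro i
    ext v
    simp only [Finset.mem_filter, Finset.mem_univ, true_and, Finset.mem_image]
    constructor
    · intro hv
      rw [hℓdef] at hv
      rcases hev : e v with j | ⟨j, t⟩
      · rw [hev] at hv
        simp at hv
      · rw [hev] at hv
        simp only [Sum.elim_inr, Prod.mk.injEq] at hv
        obtain ⟨hv1, -⟩ := hv
        subst hv1
        exact ⟨t, by rw [← hev, e.symm_apply_apply]⟩
    · rintro ⟨t, rfl⟩
      rw [hℓdef]
      simp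
  have hfibcard : ∀ i, (Finset.univ.filter fun v : Fin n => ℓ v = (i, false)).card = q i := by
    intro i
    rw [hfiber i, Finset.card_image_of_injective _ ?_, Finset.card_univ, Fintype.card_fin]
    intro t t' h
    have h2 := e.symm.injective h
    simpa using h2
  have hcenG : ∀ i, ∃ v, ℓ v = (i, true) := fun i => ⟨xc i, hℓxc i⟩
  have hcliqG : ∀ i, 2 ≤ (Finset.univ.filter fun v : Fin n => ℓ v = (i, false)).card := by
    intro i
    rw [hfibcard i]
    have := hq3 i
    omega
  have hKG : packingChromatic G + 2 * (r' + 1) = n + 2 := by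
    have h := fam_packing (by omega) ℓ G hadj hcenG hcliqG
    rwa [Fintype.card_fin] at h
  -- two clique vertices of branch i distinct from x, in the deleted graph
  have htwo : ∀ (x : Fin n) (i : Fin (r' + 1)),
      2 ≤ (Finset.univ.filter fun u : {v : Fin n // v ≠ x} => ℓ u.1 = (i, false)).card := by
    intro x i
    have hpred := Finset.pred_card_le_card_erase
      (s := Finset.univ.filter fun v : Fin n => ℓ v = (i, false)) (a := x)
    rw [hfibcard i] at hpred
    have hq3' := hq3 i
    have hlt : 1 < ((Finset.univ.filter fun v : Fin n => ℓ v = (i, false)).erase x).card := by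
      omega
    obtain ⟨y, hy, z, hz, hyz⟩ := Finset.one_lt_card.mp hlt
    obtain ⟨hyx, hy'⟩ := Finset.mem_erase.mp hy
    obtain ⟨hzx, hz'⟩ := Finset.mem_erase.mp hz
    simp only [Finset.mem_filter, Finset.mem_univ, true_and] at hy' hz'
    apply Finset.one_lt_card.mpr
    refine ⟨⟨y, hyx⟩, ?_, ⟨z, hzx⟩, ?_, ?_⟩
    · simp only [Finset.mem_filter, Finset.mem_univ, true_and]
      exact hy'
    · simp only [Finset.mem_filter, Finset.mem_univ, true_and]
      exact hz'
    · exact fun h => hyz (congrArg Subtype.val h)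
  have hcard_sub : ∀ x : Fin n, Fintype.card {v : Fin n // v ≠ x} = n - 1 := by
    intro x
    have h := Fintype.card_subtype_compl (fun v : Fin n => v = x)
    rw [Fintype.card_subtype_eq, Fintype.card_fin] at h
    exact h
  have hadjdel : ∀ (x : Fin n) (u v : {v : Fin n // v ≠ x}), (deleteVert G x).Adj u v ↔
      u ≠ v ∧ ((ℓ u.1).1 = (ℓ v.1).1 ∨ ((ℓ u.1).2 = true ∧ (ℓ v.1).2 = true)) := by
    intro x u v
    constructor
    · intro h
      have h' : G.Adj u.1 v.1 := by simpa using h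
      exact ⟨fun he => (h'.ne) (congrArg Subtype.val he), ((hadj _ _).mp h').2⟩
    · rintro ⟨hne, h2⟩
      have h' : G.Adj u.1 v.1 := (hadj _ _).mpr ⟨fun he => hne (Subtype.ext he), h2⟩
      simpa using h'
  have hdelQ : ∀ x : Fin n, (ℓ x).2 = false →
      packingChromatic (deleteVert G x) + 2 * (r' + 1) = (n - 1) + 2 := by
    intro x hx
    have hcen' : ∀ i, ∃ u : {v : Fin n // v ≠ x}, (fun u : {v : Fin n // v ≠ x} => ℓ u.1) u = (i, true) := by
      intro i
      refine ⟨⟨xc i, fun hxe => ?_⟩, hℓxc i⟩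
      have h := hℓxc i
      rw [hxe] at h
      rw [h] at hx
      simp at hx
    have h := fam_packing (r := r' + 1) (by omega) (fun u : {v : Fin n // v ≠ x} => ℓ u.1)
      (deleteVert G x) (hadjdel x) hcen' (fun i => htwo x i)
    rwa [hcard_sub x] at h
  have hdelC : ∀ i : Fin (r' + 1),
      packingChromatic (deleteVert G (xc i)) + 2 * (r' + 1) + q i = n + 3 := by
    intro i
    set x := xc i with hxdef
    set P : Set {v : Fin n // v ≠ x} := {u | (ℓ u.1).1 = i} with hP
    have hPmem : ∀ u : {v : Fin n // v ≠ x}, u ∈ P ↔ (ℓ u.1).1 = i := fun u => Iff.rfl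
    have hcrossP : ∀ u v, u ∈ P → v ∉ P → ¬ (deleteVert G x).Adj u v := by
      intro u v hu hv hA
      rcases ((hadjdel x u v).mp hA).2 with h2 | h2
      · refine hv ?_
        rw [hPmem]
        rw [← h2]
        exact hu
      · have hcen'' : ℓ u.1 = (i, true) := Prod.ext hu h2.1
        exact u.2 (hcenu _ _ hcen'')
    have hUnion := union_packing (deleteVert G x) P hcrossP
    obtain ⟨a0, ha0⟩ : ∃ a0 : Fin n, ℓ a0 = (i, false) := by
      have h := hfibcard i
      have h3 := hq3 i
      have hpos' : 0 < (Finset.univ.filter fun v : Fin n => ℓ v = (i, false)).card := by omega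
      obtain ⟨y, hy⟩ := Finset.card_pos.mp hpos'
      exact ⟨y, (Finset.mem_filter.mp hy).2⟩
    have hℓx : ℓ x = (i, true) := by rw [hxdef]; exact hℓxc i
    have ha0x : a0 ≠ x := by
      intro h
      rw [← h, ha0] at hℓx
      simp at hℓx
    -- the A part: the deleted branch clique
    set GA := (deleteVert G x).induce P with hGA
    set ℓA : ↥P → Fin 1 × Bool := fun u => (0, decide (u.1.1 = a0)) with hℓA
    have hadjA : ∀ u v : ↥P, GA.Adj u v ↔ u ≠ v ∧
        ((ℓA u).1 = (ℓA v).1 ∨ ((ℓA u).2 = true ∧ (ℓA v).2 = true)) := by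
      intro u v
      constructor
      · intro h
        have h' : G.Adj u.1.1 v.1.1 := by exact h
        exact ⟨fun he => h'.ne (congrArg (fun w : ↥P => w.1.1) he), Or.inl rfl⟩
      · rintro ⟨hne, -⟩
        have hbr : (ℓ u.1.1).1 = (ℓ v.1.1).1 := by
          have hu2 : (ℓ u.1.1).1 = i := u.2
          have hv2 : (ℓ v.1.1).1 = i := v.2
          rw [hu2, hv2]
        have h' : G.Adj u.1.1 v.1.1 :=
          (hadj _ _).mpr ⟨fun he => hne (Subtype.ext (Subtype.ext he)), Or.inl hbr⟩
        exact h'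
    have hcenA : ∀ j : Fin 1, ∃ u : ↥P, ℓA u = (j, true) := by
      intro j
      have hj : j = 0 := Subsingleton.elim _ _
      subst hj
      refine ⟨⟨⟨a0, ha0x⟩, show (ℓ a0).1 = i by rw [ha0]⟩, ?_⟩
      rw [hℓA]
      simp
    have hcliqA : ∀ j : Fin 1, 2 ≤ (Finset.univ.filter fun u : ↥P => ℓA u = (j, false)).card := by
      intro j
      have hj : j = 0 := Subsingleton.elim _ _
      subst hj
      have hpred := Finset.pred_card_le_card_erase
        (s := Finset.univ.filter fun v : Fin n => ℓ v = (i, false)) (a := a0)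
      rw [hfibcard i] at hpred
      have hq3' := hq3 i
      have hlt : 1 < ((Finset.univ.filter fun v : Fin n => ℓ v = (i, false)).erase a0).card := by
        omega
      obtain ⟨y, hy, z, hz, hyz⟩ := Finset.one_lt_card.mp hlt
      obtain ⟨hya, hy'⟩ := Finset.mem_erase.mp hy
      obtain ⟨hza, hz'⟩ := Finset.mem_erase.mp hz
      simp only [Finset.mem_filter, Finset.mem_univ, true_and] at hy' hz'
      have hyx : y ≠ x := by
        intro h
        rw [← h, hy'] at hℓx
        simp at hℓx
      have hzx : z ≠ x := by
        intro h
        rw [← h, hz'] at hℓx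
        simp at hℓx
      apply Finset.one_lt_card.mpr
      refine ⟨⟨⟨y, hyx⟩, show (ℓ y).1 = i by rw [hy']⟩, ?_,
        ⟨⟨z, hzx⟩, show (ℓ z).1 = i by rw [hz']⟩, ?_, ?_⟩
      · simp only [Finset.mem_filter, Finset.mem_univ, true_and, hℓA]
        simp [hya]
      · simp only [Finset.mem_filter, Finset.mem_univ, true_and, hℓA]
        simp [hza]
      · exact fun h => hyz (congrArg (fun w : ↥P => w.1.1) h)
    have hcardA : Fintype.card ↥P = q i := by
      rw [← hfibcard i, ← Fintype.card_subtype]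
      apply Fintype.card_congr
      refine ⟨fun u => ⟨u.1.1, ?_⟩, fun v => ⟨⟨v.1, ?_⟩, ?_⟩, fun u => ?_, fun v => ?_⟩
      · have hfst : (ℓ u.1.1).1 = i := u.2
        rcases hsnd : (ℓ u.1.1).2 with _ | _
        · exact Prod.ext hfst hsnd
        · exact absurd (hcenu _ _ (Prod.ext hfst hsnd)) u.1.2
      · intro h
        have h2 := v.2
        rw [h, hℓx] at h2
        simp at h2
      · show (ℓ v.1).1 = i
        rw [v.2]
      · rfl
      · rfl
    have hχA : packingChromatic GA = q i := by
      have h := fam_packing (r := 1) le_rfl ℓA GA hadjA hcenA hcliqA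
      rw [hcardA] at h
      omega
    -- the B part
    set ψ := finSuccAboveEquiv i with hψ
    set ℓB : ↥Pᶜ → Fin r' × Bool := fun u => (ψ.symm ⟨(ℓ u.1.1).1, u.2⟩, (ℓ u.1.1).2) with hℓB
    have hψinj : ∀ (a b : {j : Fin (r' + 1) // j ≠ i}), ψ.symm a = ψ.symm b ↔ a.1 = b.1 :=
      fun a b => (Equiv.apply_eq_iff_eq ψ.symm).trans Subtype.ext_iff
    set GB := (deleteVert G x).induce Pᶜ with hGB
    have hadjB : ∀ u v : ↥Pᶜ, GB.Adj u v ↔ u ≠ v ∧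
        ((ℓB u).1 = (ℓB v).1 ∨ ((ℓB u).2 = true ∧ (ℓB v).2 = true)) := by
      intro u v
      have hval : GB.Adj u v ↔ G.Adj u.1.1 v.1.1 := by
        constructor <;> intro h <;> exact h
      rw [hval, hadj]
      constructor
      · rintro ⟨hne, h2⟩
        refine ⟨fun he => hne (congrArg (fun w : ↥Pᶜ => w.1.1) he), ?_⟩
        rcases h2 with h2 | h2
        · exact Or.inl ((hψinj _ _).mpr h2)
        · exact Or.inr h2
      · rintro ⟨hne, h2⟩
        refine ⟨fun he => hne (Subtype.ext (Subtype.ext he)), ?_⟩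
        rcases h2 with h2 | h2
        · exact Or.inl ((hψinj _ _).mp h2)
        · exact Or.inr h2
    have hcenB : ∀ k : Fin r', ∃ u : ↥Pᶜ, ℓB u = (k, true) := by
      intro k
      have hji : (ψ k).1 ≠ i := (ψ k).2
      have hxcne : xc (ψ k).1 ≠ x := by
        intro h
        have h2 := hℓxc (ψ k).1
        rw [h, hℓx] at h2
        have h3 := congrArg Prod.fst h2
        simp only at h3
        exact hji h3.symm
      have hmem : (ℓ (xc (ψ k).1)).1 ≠ i := by
        rw [hℓxc]
        exact hji
      refine ⟨⟨⟨xc (ψ k).1, hxcne⟩, hmem⟩, ?_⟩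
      rw [hℓB]
      refine Prod.ext ?_ ?_
      · show ψ.symm _ = k
        have h5 : (⟨(ℓ (xc (ψ k).1)).1, hmem⟩ : {j : Fin (r' + 1) // j ≠ i}) = ψ k :=
          Subtype.ext (show (ℓ (xc (ψ k).1)).1 = (ψ k).1 by rw [hℓxc])
        rw [h5, Equiv.symm_apply_apply]
      · show (ℓ (xc (ψ k).1)).2 = true
        rw [hℓxc]
    have hcliqB : ∀ k : Fin r',
        2 ≤ (Finset.univ.filter fun u : ↥Pᶜ => ℓB u = (k, false)).card := by
      intro k
      have hji : (ψ k).1 ≠ i := (ψ k).2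
      have h2c : 1 < (Finset.univ.filter fun v : Fin n => ℓ v = ((ψ k).1, false)).card := by
        rw [hfibcard]
        have := hq3 (ψ k).1
        omega
      obtain ⟨y, hy, z, hz, hyz⟩ := Finset.one_lt_card.mp h2c
      simp only [Finset.mem_filter, Finset.mem_univ, true_and] at hy hz
      have hyx : y ≠ x := by
        intro h
        rw [← h, hy] at hℓx
        have := congrArg Prod.snd hℓx
        simp at this
      have hzx : z ≠ x := by
        intro h
        rw [← h, hz] at hℓx
        have := congrArg Prod.snd hℓx
        simp at this
      have hymem : (ℓ y).1 ≠ i := by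
        rw [hy]
        exact hji
      have hzmem : (ℓ z).1 ≠ i := by
        rw [hz]
        exact hji
      apply Finset.one_lt_card.mpr
      refine ⟨⟨⟨y, hyx⟩, hymem⟩, ?_, ⟨⟨z, hzx⟩, hzmem⟩, ?_, ?_⟩
      · simp only [Finset.mem_filter, Finset.mem_univ, true_and]
        rw [hℓB]
        refine Prod.ext ?_ ?_
        · show ψ.symm _ = k
          have h5 : (⟨(ℓ y).1, hymem⟩ : {j : Fin (r' + 1) // j ≠ i}) = ψ k :=
            Subtype.ext (show (ℓ y).1 = (ψ k).1 by rw [hy])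
          rw [h5, Equiv.symm_apply_apply]
        · show (ℓ y).2 = false
          rw [hy]
      · simp only [Finset.mem_filter, Finset.mem_univ, true_and]
        rw [hℓB]
        refine Prod.ext ?_ ?_
        · show ψ.symm _ = k
          have h5 : (⟨(ℓ z).1, hzmem⟩ : {j : Fin (r' + 1) // j ≠ i}) = ψ k :=
            Subtype.ext (show (ℓ z).1 = (ψ k).1 by rw [hz])
          rw [h5, Equiv.symm_apply_apply]
        · show (ℓ z).2 = false
          rw [hz]
      · exact fun h => hyz (congrArg (fun w : ↥Pᶜ => w.1.1) h)
    have hcardPc : Fintype.card ↥Pᶜ = (n - 1) - q i := by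
      have h := Fintype.card_subtype_compl (fun u : {v : Fin n // v ≠ x} => u ∈ P)
      rw [hcard_sub x] at h
      have e1 : Fintype.card ↥Pᶜ
          = Fintype.card {u : {v : Fin n // v ≠ x} // ¬ u ∈ P} :=
        Fintype.card_congr (Equiv.subtypeEquivRight (fun _ => Iff.rfl))
      have e2 : Fintype.card {u : {v : Fin n // v ≠ x} // u ∈ P} = Fintype.card ↥P :=
        Fintype.card_congr (Equiv.subtypeEquivRight (fun _ => Iff.rfl))
      rw [e1, h, e2, hcardA]
    have hχB : packingChromatic GB + 2 * r' = ((n - 1) - q i) + 2 := by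
      have h := fam_packing (r := r') hr1 ℓB GB hadjB hcenB hcliqB
      rwa [hcardPc] at h
    have hqsum : q i ≤ ∑ j, q j :=
      Finset.single_le_sum (fun j _ => Nat.zero_le _) (Finset.mem_univ i)
    have hqn : q i + q i + 2 * (r' + 1) ≤ n + 3 := by
      have h1 := hkey i
      have h2 := htotal i
      have h3 := hqi i
      omega
    have hle : q i ≤ packingChromatic GB := by omega
    rw [hUnion, hχA, max_eq_right hle]
    omega
  refine ⟨n, G, ?_, ?_⟩
  · intro x
    rcases hsnd : (ℓ x).2 with _ | _
    · have h := hdelQ x hsnd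
      omega
    · have hx : x = xc (ℓ x).1 := hcenu x (ℓ x).1 (Prod.ext rfl hsnd)
      rw [hx]
      have h := hdelC (ℓ x).1
      have h3 := hq3 (ℓ x).1
      omega
  · ext dd
    simp only [Set.mem_setOf_eq, Finset.mem_coe]
    constructor
    · rintro ⟨x, rfl⟩
      rcases hsnd : (ℓ x).2 with _ | _
      · have h := hdelQ x hsnd
        have heq : packingChromatic G - packingChromatic (deleteVert G x) = 1 := by omega
        rw [heq]
        exact h1
      · have hx : x = xc (ℓ x).1 := hcenu x (ℓ x).1 (Prod.ext rfl hsnd)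
        rw [hx]
        have h := hdelC (ℓ x).1
        have h3 := hq3 (ℓ x).1
        have hqi' := hqi (ℓ x).1
        have heq : packingChromatic G - packingChromatic (deleteVert G (xc (ℓ x).1))
            = s (ℓ x).1 := by omega
        rw [heq]
        exact Finset.mem_of_mem_erase (hsE (ℓ x).1)
    · intro hdS
      by_cases hdd : dd = 1
      · subst hdd
        obtain ⟨y, hy⟩ : ∃ y : Fin n, ℓ y = ((0 : Fin (r' + 1)), false) := by
          have h := hfibcard 0
          have h3 := hq3 0
          have hpos' : 0 <
              (Finset.univ.filter fun v : Fin n => ℓ v = ((0 : Fin (r' + 1)), false)).card := by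
            omega
          obtain ⟨y, hy⟩ := Finset.card_pos.mp hpos'
          exact ⟨y, (Finset.mem_filter.mp hy).2⟩
        refine ⟨y, ?_⟩
        have h := hdelQ y (by rw [hy])
        omega
      · have hdE : dd ∈ E := Finset.mem_erase.mpr ⟨hdd, hdS⟩
        obtain ⟨i, rfl⟩ := hsSurj dd hdE
        refine ⟨xc i, ?_⟩
        have h := hdelC i
        have h3 := hq3 i
        have hqi' := hqi i
        omega
end

section
/- If a graph G contains a cycle C whose order n satisfies n > 3 and n not divisible by 4, and C does not contain all vertices of G, then G is not 4-χρ-critical. -/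
open SimpleGraph

open scoped Fin.NatCast Fin.CommRing

lemma cycle_key {n : ℕ} [NeZero n] (hn : 3 < n) (h4 : ¬ (4 ∣ n)) (c : Fin n → ℕ)
    (hc : ∀ i, 1 ≤ c i ∧ c i ≤ 3)
    (hd : ∀ (k : ℕ), 0 < k → k ≤ 3 → ∀ i : Fin n, k ≤ c i → c (i + (k : Fin n)) ≠ c i) :
    False := by
  have E1 : ∀ i : Fin n, c (i + 1) ≠ c i := by
    intro i
    have := hd 1 one_pos (by omega) i (hc i).1
    simpa using this
  have E2 : ∀ i : Fin n, 2 ≤ c i → c (i + 2) ≠ c i := by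
    intro i h
    have := hd 2 two_pos (by omega) i h
    simpa using this
  have E3 : ∀ i : Fin n, 3 ≤ c i → c (i + 3) ≠ c i := by
    intro i h
    have := hd 3 three_pos le_rfl i h
    simpa using this
  -- Lemma A : no two adjacent non-1 colors
  have A : ∀ i : Fin n, c i ≠ 1 → c (i + 1) = 1 := by
    intro i h1
    by_contra h2
    have b0 := hc (i - 2); have b1 := hc (i - 1); have b2 := hc i
    have b3 := hc (i + 1); have b4 := hc (i + 2); have b5 := hc (i + 3)
    have e1 := E1 i
    have e2 := E1 (i + 1); rw [show i + 1 + 1 = i + 2 by ring] at e2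
    have e3 := E1 (i + 2); rw [show i + 2 + 1 = i + 3 by ring] at e3
    have e4 := E2 i
    have e5 := E2 (i + 1); rw [show i + 1 + 2 = i + 3 by ring] at e5
    have e6 := E3 i
    have e7 := E1 (i - 1); rw [show i - 1 + 1 = i by ring] at e7
    have e8 := E2 (i - 1); rw [show i - 1 + 2 = i + 1 by ring] at e8
    have e9 := E1 (i - 2); rw [show i - 2 + 1 = i - 1 by ring] at e9
    have e10 := E2 (i - 2); rw [show i - 2 + 2 = i by ring] at e10
    have e11 := E3 (i - 2); rw [show i - 2 + 3 = i + 1 by ring] at e11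
    omega
  -- Step 2
  have S2 : ∀ i : Fin n, c i ≠ 1 → c (i + 2) = 5 - c i := by
    intro i h1
    have hA := A i h1
    have e1 := E1 (i + 1); rw [show i + 1 + 1 = i + 2 by ring] at e1
    have e2 := E2 i
    have b2 := hc i; have b4 := hc (i + 2)
    omega
  -- find a vertex not colored 1
  obtain ⟨i0, hi0⟩ : ∃ i : Fin n, c i ≠ 1 := by
    by_cases h : c 0 = 1
    · refine ⟨1, ?_⟩
      have := E1 0; rw [zero_add] at this; omega
    · exact ⟨0, h⟩
  have bi0 := hc i0
  -- periodicity
  have Q : ∀ k : ℕ, c (i0 + ((4 * k : ℕ) : Fin n)) = c i0 ∧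
      c (i0 + ((4 * k + 1 : ℕ) : Fin n)) = 1 ∧
      c (i0 + ((4 * k + 2 : ℕ) : Fin n)) = 5 - c i0 ∧
      c (i0 + ((4 * k + 3 : ℕ) : Fin n)) = 1 := by
    intro k
    induction k with
    | zero =>
      have h1 : c (i0 + 1) = 1 := A i0 hi0
      have h2 : c (i0 + 2) = 5 - c i0 := S2 i0 hi0
      have h3 : c (i0 + 3) = 1 := by
        have := A (i0 + 2) (by omega)
        rw [show i0 + 2 + 1 = i0 + 3 by ring] at this; exact this
      refine ⟨?_, ?_, ?_, ?_⟩
      · rw [show ((4 * 0 : ℕ) : Fin n) = 0 by push_cast; ring, add_zero]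
      · rw [show ((4 * 0 + 1 : ℕ) : Fin n) = 1 by push_cast; ring]; exact h1
      · rw [show ((4 * 0 + 2 : ℕ) : Fin n) = 2 by push_cast; ring]; exact h2
      · rw [show ((4 * 0 + 3 : ℕ) : Fin n) = 3 by push_cast; ring]; exact h3
    | succ k ih =>
      obtain ⟨q0, q1, q2, q3⟩ := ih
      have key : c (i0 + ((4 * (k + 1) : ℕ) : Fin n)) = c i0 := by
        have h1 := S2 (i0 + ((4 * k + 2 : ℕ) : Fin n)) (by omega)
        rw [q2] at h1
        rw [show i0 + ((4 * (k + 1) : ℕ) : Fin n)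
            = i0 + ((4 * k + 2 : ℕ) : Fin n) + 2 by push_cast; ring]
        omega
      refine ⟨key, ?_, ?_, ?_⟩
      · have := A _ (by rw [key]; exact hi0)
        rw [show i0 + ((4 * (k + 1) + 1 : ℕ) : Fin n)
            = i0 + ((4 * (k + 1) : ℕ) : Fin n) + 1 by push_cast; ring]
        rw [this]
      · have := S2 _ (by rw [key]; exact hi0)
        rw [show i0 + ((4 * (k + 1) + 2 : ℕ) : Fin n)
            = i0 + ((4 * (k + 1) : ℕ) : Fin n) + 2 by push_cast; ring]
        rw [this, key]
      · have h2 : c (i0 + ((4 * (k + 1) : ℕ) : Fin n) + 2) = 5 - c i0 := by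
          have := S2 _ (by rw [key]; exact hi0); rw [this, key]
        have h3 := A _ (show c (i0 + ((4 * (k + 1) : ℕ) : Fin n) + 2) ≠ 1 by omega)
        rw [show i0 + ((4 * (k + 1) + 3 : ℕ) : Fin n)
            = i0 + ((4 * (k + 1) : ℕ) : Fin n) + 2 + 1 by push_cast; ring]
        exact h3
  -- conclude
  have hself : c (i0 + ((n : ℕ) : Fin n)) = c i0 := by
    rw [Fin.natCast_self, add_zero]
  have hr : n % 4 = 1 ∨ n % 4 = 2 ∨ n % 4 = 3 := by omega
  obtain ⟨q0, q1, q2, q3⟩ := Q (n / 4)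
  rcases hr with h | h | h
  · rw [show (4 * (n / 4) + 1 : ℕ) = n by omega] at q1; omega
  · rw [show (4 * (n / 4) + 2 : ℕ) = n by omega] at q2; omega
  · rw [show (4 * (n / 4) + 3 : ℕ) = n by omega] at q3; omega

lemma cycle_walk {n : ℕ} [NeZero n] (hn : 1 < n) (i : Fin n) (k : ℕ) :
    ∃ w : (cycleGraph n).Walk i (i + (k : Fin n)), w.length = k := by
  induction k with
  | zero =>
    have h : i + ((0 : ℕ) : Fin n) = i := by rw [Nat.cast_zero, add_zero]
    refine ⟨Walk.nil.copy rfl h.symm, by simp⟩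
  | succ k ih =>
    obtain ⟨w, hw⟩ := ih
    have hadj : (cycleGraph n).Adj (i + (k : Fin n)) (i + ((k + 1 : ℕ) : Fin n)) := by
      rw [cycleGraph_adj']
      right
      have : i + ((k + 1 : ℕ) : Fin n) - (i + (k : Fin n)) = 1 := by push_cast; ring
      rw [this]
      rcases n with _ | _ | m
      · omega
      · omega
      · simp [Fin.val_one]
    exact ⟨w.concat hadj, by simp [hw]⟩

/-- If `G` contains a cycle of order `n > 3` with `4 ∤ n` that does not contain
all vertices of `G`, then `G` is not `4`-`χρ`-critical. -/
theorem stmt_12 {V : Type*} [Fintype V] (G : SimpleGraph V) (n : ℕ)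
    (hn : 3 < n) (h4 : ¬ (4 ∣ n)) (f : cycleGraph n →g G)
    (hf : Function.Injective f) (hproper : ∃ v : V, v ∉ Set.range f) :
    ¬ (packingChromatic G = 4 ∧
      ∀ x : V, packingChromatic (deleteVert G x) < 4) := by
  rintro ⟨-, hcrit⟩
  haveI : NeZero n := ⟨by omega⟩
  obtain ⟨x, hx⟩ := hproper
  have hnex : ∀ i : Fin n, f i ≠ x := fun i hi => hx ⟨i, hi⟩
  haveI : Fintype {v : V // v ≠ x} := Fintype.ofFinite _
  have hSne : {k | ∃ c : {v : V // v ≠ x} → ℕ,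
      IsPackingColoring (deleteVert G x) k c}.Nonempty := by
    refine ⟨Fintype.card {v : V // v ≠ x},
      fun v => ((Fintype.equivFin _) v : ℕ) + 1, ?_, ?_⟩
    · intro v
      rw [Finset.mem_Icc]
      exact ⟨Nat.succ_le_succ (Nat.zero_le _),
        Nat.succ_le_of_lt ((Fintype.equivFin _) v).isLt⟩
    · intro u v huv heq
      exfalso
      exact huv ((Fintype.equivFin _).injective
        (Fin.ext (Nat.succ_injective heq)))
  have hmem := Nat.sInf_mem hSne
  obtain ⟨c, hc1, hc2⟩ := hmem
  have hlt : sInf {k | ∃ c : {v : V // v ≠ x} → ℕ,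
      IsPackingColoring (deleteVert G x) k c} < 4 := hcrit x
  -- the homomorphism into the vertex-deleted graph
  let f' : cycleGraph n →g deleteVert G x :=
    ⟨fun i => ⟨f i, hnex i⟩, fun {a b} hab => f.map_adj hab⟩
  set c' : Fin n → ℕ := fun i => c ⟨f i, hnex i⟩ with hc'
  have hb : ∀ i, 1 ≤ c' i ∧ c' i ≤ 3 := by
    intro i
    have h := hc1 ⟨f i, hnex i⟩
    rw [Finset.mem_Icc] at h
    exact ⟨h.1, le_trans h.2 (by omega)⟩
  refine cycle_key hn h4 c' hb ?_
  intro k hk0 hk3 i hki heq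
  have hkn : (k : Fin n) ≠ 0 := by
    intro h
    rw [Fin.natCast_eq_zero] at h
    have := Nat.le_of_dvd hk0 h
    omega
  have hiv : i ≠ i + (k : Fin n) := fun h => hkn (left_eq_add.mp h)
  have huv : (⟨f i, hnex i⟩ : {v : V // v ≠ x}) ≠ ⟨f (i + (k : Fin n)), hnex _⟩ := by
    intro h
    exact hiv (hf (Subtype.ext_iff.mp h))
  have hlt2 := hc2 _ _ huv heq.symm
  obtain ⟨w, hw⟩ := cycle_walk (by omega : 1 < n) i k
  have hmap : (deleteVert G x).edist ⟨f i, hnex i⟩ ⟨f (i + (k : Fin n)), hnex _⟩ ≤ (k : ℕ∞) := by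
    have h1 := SimpleGraph.edist_le (w.map f')
    rw [Walk.length_map, hw] at h1
    exact h1
  have hle : (k : ℕ∞) ≤ (c' i : ℕ∞) := by exact_mod_cast hki
  exact absurd (lt_of_lt_of_le hlt2 (le_trans hmap hle)) (lt_irrefl _)
end

section
/- For every n ≥ 5 with n not congruent to 0 mod 4, the cycle C_n is 4-χρ-critical. -/
open SimpleGraph
open Fin.NatCast Fin.CommRing

-- potential / Lipschitz lower bound on edist
lemma walk_pot {V : Type*} {G : SimpleGraph V} {f : V → ℕ}
    (hf : ∀ a b, G.Adj a b → f b ≤ f a + 1) :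
    ∀ {u v : V} (p : G.Walk u v), f v ≤ f u + p.length := by
  intro u v p
  induction p with
  | nil => simp
  | cons h p ih =>
    have := hf _ _ h
    simp only [SimpleGraph.Walk.length_cons]
    omega

lemma edist_pot {V : Type*} {G : SimpleGraph V} {f : V → ℕ}
    (hf : ∀ a b, G.Adj a b → f b ≤ f a + 1) (u v : V) :
    (f v : ℕ∞) ≤ (f u : ℕ∞) + G.edist u v := by
  by_cases hr : G.Reachable u v
  · obtain ⟨p, hp⟩ := hr.exists_walk_length_eq_edist
    rw [← hp]
    exact_mod_cast walk_pot hf p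
  · rw [SimpleGraph.edist_eq_top_of_not_reachable hr]
    simp

lemma mod_small {a n : ℕ} (h : a < 2 * n) (hn : 0 < n) :
    a % n = if a < n then a else a - n := by
  split
  · exact Nat.mod_eq_of_lt ‹_›
  · rw [Nat.mod_eq_sub_mod (by omega), Nat.mod_eq_of_lt (by omega)]

def cd (n : ℕ) (u v : Fin n) : ℕ := min ((v - u).val) (n - (v - u).val)

lemma cyc_lip {n : ℕ} [NeZero n] (hn : 2 ≤ n) (u a b : Fin n) (hab : (cycleGraph n).Adj a b) :
    cd n u b ≤ cd n u a + 1 := by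
  rw [cycleGraph_adj'] at hab
  have h1 : (a - u).val < n := (a - u).isLt
  rcases hab with hab | hab
  · -- (a - b).val = 1 : b = a - (a - b)
    have hst : b - u = (a - u) - (a - b) := by ring
    have h2 : (b - u).val = (n - 1 + (a - u).val) % n := by
      rw [hst, Fin.sub_def, hab]
    rw [mod_small (by omega) (by omega)] at h2
    unfold cd
    split at h2 <;> omega
  · -- (b - a).val = 1
    have hst : b - u = (a - u) + (b - a) := by ring
    have h2 : (b - u).val = ((a - u).val + 1) % n := by
      rw [hst, Fin.add_def, hab]
    rw [mod_small (by omega) (by omega)] at h2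
    unfold cd
    split at h2 <;> omega

lemma cyc_le {n : ℕ} [NeZero n] (hn : 2 ≤ n) (u v : Fin n) :
    (cd n u v : ℕ∞) ≤ (cycleGraph n).edist u v := by
  have h := edist_pot (f := cd n u) (fun a b hab => cyc_lip hn u a b hab) u v
  have h0 : cd n u u = 0 := by simp [cd, sub_self]
  rwa [h0, Nat.cast_zero, zero_add] at h

lemma adj_succ {n : ℕ} [NeZero n] (hn : 2 ≤ n) (i : Fin n) :
    (cycleGraph n).Adj i (i + ((1:ℕ) : Fin n)) := by
  rw [cycleGraph_adj']
  right
  have h : i + ((1:ℕ) : Fin n) - i = ((1:ℕ) : Fin n) := by ring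
  rw [h, Fin.val_cast_of_lt (by omega)]

lemma edist_le_cast {n : ℕ} [NeZero n] (hn : 2 ≤ n) (i : Fin n) (d : ℕ) :
    (cycleGraph n).edist i (i + ((d:ℕ) : Fin n)) ≤ (d : ℕ∞) := by
  induction d with
  | zero => simp
  | succ d ih =>
    have hadj := adj_succ hn (i + ((d:ℕ) : Fin n))
    have hcast : (((d+1:ℕ)) : Fin n) = ((d:ℕ) : Fin n) + ((1:ℕ) : Fin n) := by push_cast; ring
    have h1 : (cycleGraph n).edist (i + ((d:ℕ):Fin n)) (i + ((d+1:ℕ):Fin n)) = 1 := by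
      rw [hcast, ← add_assoc]
      exact (edist_eq_one_iff_adj).mpr hadj
    calc (cycleGraph n).edist i (i + ((d+1:ℕ):Fin n))
        ≤ (cycleGraph n).edist i (i + ((d:ℕ):Fin n)) +
          (cycleGraph n).edist (i + ((d:ℕ):Fin n)) (i + ((d+1:ℕ):Fin n)) :=
          SimpleGraph.edist_triangle
      _ ≤ (d : ℕ∞) + 1 := by rw [h1]; exact add_le_add_left ih 1
      _ = ((d+1 : ℕ) : ℕ∞) := by push_cast; ring

set_option synthInstance.maxSize 2000 in
set_option synthInstance.maxHeartbeats 1000000 in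
set_option maxRecDepth 20000 in
lemma win : ∀ a b c d e f g h i : Fin 3,
  ((a ≠ b) ∧ (b ≠ c) ∧ (c ≠ d) ∧ (d ≠ e) ∧ (e ≠ f) ∧ (f ≠ g) ∧ (g ≠ h) ∧ (h ≠ i) ∧
  (a = c → a = 0) ∧ (b = d → b = 0) ∧ (c = e → c = 0) ∧ (d = f → d = 0) ∧
  (e = g → e = 0) ∧ (f = h → f = 0) ∧ (g = i → g = 0) ∧
  (a = d → a ≠ 2) ∧ (b = e → b ≠ 2) ∧ (c = f → c ≠ 2) ∧ (d = g → d ≠ 2) ∧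
  (e = h → e ≠ 2) ∧ (f = i → f ≠ 2)) →
  c = g := by decide

lemma no3 {n : ℕ} (hn : 5 ≤ n) (h4 : n % 4 ≠ 0) (c : Fin n → ℕ) :
    ¬ IsPackingColoring (cycleGraph n) 3 c := by
  haveI : NeZero n := ⟨by omega⟩
  rintro ⟨hmem, hdist⟩
  have hmem' : ∀ v, 1 ≤ c v ∧ c v ≤ 3 := by
    intro v; have := hmem v; simpa [Finset.mem_Icc] using this
  -- basic constraints
  have hne : ∀ (i : Fin n) (d : ℕ), 0 < d → d < n → i ≠ i + (d : Fin n) := by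
    intro i d hd1 hd2 heq
    have : ((d:ℕ) : Fin n) = 0 := by
      have := heq.symm
      rwa [add_eq_left] at this
    rw [Fin.natCast_eq_zero] at this
    have := Nat.le_of_dvd hd1 this
    omega
  have key : ∀ (i : Fin n) (d : ℕ), 0 < d → d ≤ 3 →
      c i = c (i + (d : Fin n)) → c i < d := by
    intro i d hd1 hd3 hcc
    have hlt := hdist i (i + (d : Fin n)) (hne i d hd1 (by omega)) hcc
    have hle := edist_le_cast (by omega) i d
    have : (c i : ℕ∞) < (d : ℕ∞) := lt_of_lt_of_le hlt hle
    exact_mod_cast this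
  have L1 : ∀ i : Fin n, c i ≠ c (i + ((1:ℕ) : Fin n)) := by
    intro i hcc
    have := key i 1 (by omega) (by omega) hcc
    have := (hmem' i).1
    omega
  have L2 : ∀ i : Fin n, c i = c (i + ((2:ℕ) : Fin n)) → c i = 1 := by
    intro i hcc
    have := key i 2 (by omega) (by omega) hcc
    have := (hmem' i).1
    omega
  have L3 : ∀ i : Fin n, c i = c (i + ((3:ℕ) : Fin n)) → c i ≤ 2 := by
    intro i hcc
    have := key i 3 (by omega) (by omega) hcc
    omega
  -- encode colors in Fin 3
  let f : Fin n → Fin 3 := fun v => ⟨c v - 1, by have := hmem' v; omega⟩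
  have hfeq : ∀ u v, f u = f v ↔ c u = c v := by
    intro u v
    simp only [f, Fin.mk.injEq]
    have hu := hmem' u; have hv := hmem' v
    omega
  have hf0 : ∀ u, f u = 0 ↔ c u = 1 := by
    intro u
    simp only [f, Fin.ext_iff, Fin.val_zero]
    have hu := hmem' u
    omega
  have hf2 : ∀ u, f u ≠ 2 ↔ c u ≤ 2 := by
    intro u
    have h2 : (2 : Fin 3).val = 2 := rfl
    simp only [f, ne_eq, Fin.ext_iff, h2]
    have hu := hmem' u
    omega
  have hop : ∀ (j d : ℕ) (i : Fin n),
      i + ((j:ℕ):Fin n) + ((d:ℕ):Fin n) = i + (((j+d:ℕ)):Fin n) := by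
    intro j d i
    rw [add_assoc, ← Nat.cast_add]
  have W : ∀ i : Fin n, c (i + ((2:ℕ):Fin n)) = c (i + ((6:ℕ):Fin n)) := by
    intro i
    have A : ∀ j k : ℕ, k = j + 1 →
        f (i + ((j:ℕ):Fin n)) ≠ f (i + ((k:ℕ):Fin n)) := by
      intro j k hk h
      subst hk
      apply L1 (i + ((j:ℕ):Fin n))
      rw [hop j 1]
      exact (hfeq _ _).mp h
    have B : ∀ j k : ℕ, k = j + 2 →
        f (i + ((j:ℕ):Fin n)) = f (i + ((k:ℕ):Fin n)) → f (i + ((j:ℕ):Fin n)) = 0 := by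
      intro j k hk h
      subst hk
      rw [hf0]
      apply L2
      rw [hop j 2]
      exact (hfeq _ _).mp h
    have C : ∀ j k : ℕ, k = j + 3 →
        f (i + ((j:ℕ):Fin n)) = f (i + ((k:ℕ):Fin n)) → f (i + ((j:ℕ):Fin n)) ≠ 2 := by
      intro j k hk h
      subst hk
      rw [hf2]
      apply L3
      rw [hop j 3]
      exact (hfeq _ _).mp h
    have h0 : i + ((0:ℕ):Fin n) = i := by simp
    have hwin := win (f (i + ((0:ℕ):Fin n))) (f (i + ((1:ℕ):Fin n))) (f (i + ((2:ℕ):Fin n)))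
      (f (i + ((3:ℕ):Fin n))) (f (i + ((4:ℕ):Fin n))) (f (i + ((5:ℕ):Fin n)))
      (f (i + ((6:ℕ):Fin n))) (f (i + ((7:ℕ):Fin n))) (f (i + ((8:ℕ):Fin n)))
      ⟨A 0 1 rfl, A 1 2 rfl, A 2 3 rfl, A 3 4 rfl, A 4 5 rfl, A 5 6 rfl, A 6 7 rfl, A 7 8 rfl,
       B 0 2 rfl, B 1 3 rfl, B 2 4 rfl, B 3 5 rfl, B 4 6 rfl, B 5 7 rfl, B 6 8 rfl,
       C 0 3 rfl, C 1 4 rfl, C 2 5 rfl, C 3 6 rfl, C 4 7 rfl, C 5 8 rfl⟩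
    exact (hfeq _ _).mp hwin
  have P4 : ∀ j : Fin n, c (j + ((4:ℕ):Fin n)) = c j := by
    intro j
    have h := W (j - ((2:ℕ):Fin n))
    have e1 : j - ((2:ℕ):Fin n) + ((2:ℕ):Fin n) = j := by ring
    have e2 : j - ((2:ℕ):Fin n) + ((6:ℕ):Fin n) = j + ((4:ℕ):Fin n) := by
      push_cast
      ring
    rw [e1, e2] at h
    exact h.symm
  have PN : ∀ (k : ℕ) (j : Fin n), c (j + ((4*k:ℕ):Fin n)) = c j := by
    intro k
    induction k with
    | zero => intro j; simp
    | succ k ih =>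
      intro j
      have hmul : (4*(k+1) : ℕ) = 4*k + 4 := by ring
      have hcast : ((4*(k+1) : ℕ) : Fin n) = ((4*k:ℕ):Fin n) + ((4:ℕ):Fin n) := by
        rw [hmul, Nat.cast_add]
      rw [hcast, ← add_assoc, P4, ih]
  -- finish by cases on n % 4
  have hfin : ∀ m : ℕ, (∃ k : ℕ, 4*k = m*n + 1) → False := by
    rintro m ⟨k, hk⟩
    have hc : ((4*k : ℕ) : Fin n) = ((1:ℕ) : Fin n) := by
      rw [hk]
      push_cast [Fin.natCast_self]
      ring
    have := PN k 0
    rw [hc] at this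
    exact L1 0 this.symm
  have hr : n % 4 = 1 ∨ n % 4 = 2 ∨ n % 4 = 3 := by omega
  rcases hr with hr | hr | hr
  · exact hfin 3 ⟨3*(n/4)+1, by omega⟩
  · -- n % 4 = 2 : 4*(n/4+1) = n + 2
    have hk : 4*(n/4+1) = n + 2 := by omega
    have hc : ((4*(n/4+1) : ℕ) : Fin n) = ((2:ℕ) : Fin n) := by
      rw [hk]
      push_cast [Fin.natCast_self]
      ring
    have hall : ∀ j : Fin n, c j = 1 := by
      intro j
      apply L2 j
      have := PN (n/4+1) j
      rw [hc] at this
      exact this.symm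
    exact L1 0 (by rw [hall, hall])
  · exact hfin 1 ⟨n/4+1, by omega⟩

lemma has4 {n : ℕ} (hn : 5 ≤ n) (h4 : n % 4 ≠ 0) :
    ∃ c : Fin n → ℕ, IsPackingColoring (cycleGraph n) 4 c := by
  haveI : NeZero n := ⟨by omega⟩
  refine ⟨fun i => if i.val = n - 1 then 4 else
    if i.val % 4 = 1 then 2 else if i.val % 4 = 3 then 3 else 1, ?_, ?_⟩
  · intro v
    simp only [Finset.mem_Icc]
    split_ifs <;> omega
  · intro u v huv hcc
    have hvne : u.val ≠ v.val := fun h => huv (Fin.ext h)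
    have hu : u.val < n := u.isLt
    have hv : v.val < n := v.isLt
    -- the cyclic distance bound
    have hcd : (cd n u v : ℕ∞) ≤ (cycleGraph n).edist u v := cyc_le (by omega) u v
    have hΔ : (v - u).val = (n - u.val + v.val) % n := by rw [Fin.sub_def]
    rw [mod_small (by omega) (by omega)] at hΔ
    suffices h : (if u.val = n - 1 then 4 else
      if u.val % 4 = 1 then 2 else if u.val % 4 = 3 then 3 else 1) < cd n u v by
      refine lt_of_lt_of_le ?_ hcd
      exact_mod_cast h
    unfold cd
    beta_reduce at hcc
    split_ifs at hcc ⊢ <;> split at hΔ <;> omega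

lemma del3 {n : ℕ} (hn : 5 ≤ n) (x : Fin n) :
    ∃ c : {v : Fin n // v ≠ x} → ℕ, IsPackingColoring (deleteVert (cycleGraph n) x) 3 c := by
  haveI : NeZero n := ⟨by omega⟩
  set p : {v : Fin n // v ≠ x} → ℕ := fun v => (v.1 - x).val - 1 with hp
  have hval : ∀ v : {v : Fin n // v ≠ x}, 1 ≤ (v.1 - x).val ∧ (v.1 - x).val < n := by
    intro v
    refine ⟨?_, (v.1 - x).isLt⟩
    have : v.1 - x ≠ 0 := sub_ne_zero_of_ne v.2
    have : (v.1 - x).val ≠ 0 := fun h => this (Fin.ext (by simpa using h))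
    omega
  have hlip : ∀ a b, (deleteVert (cycleGraph n) x).Adj a b → p b ≤ p a + 1 := by
    intro a b hab
    have hab' : (cycleGraph n).Adj a.1 b.1 := hab
    rw [cycleGraph_adj'] at hab'
    have hsa := hval a
    have hsb := hval b
    rcases hab' with h | h
    · -- (a - b).val = 1 :  b - x = (a - x) - (a - b)
      have hst : b.1 - x = (a.1 - x) - (a.1 - b.1) := by ring
      have h2 : (b.1 - x).val = (n - 1 + (a.1 - x).val) % n := by
        rw [hst, Fin.sub_def, h]
      rw [mod_small (by omega) (by omega)] at h2
      simp only [hp]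
      split at h2 <;> omega
    · -- (b - a).val = 1
      have hst : b.1 - x = (a.1 - x) + (b.1 - a.1) := by ring
      have h2 : (b.1 - x).val = ((a.1 - x).val + 1) % n := by
        rw [hst, Fin.add_def, h]
      rw [mod_small (by omega) (by omega)] at h2
      simp only [hp]
      split at h2 <;> omega
  have hpt := edist_pot hlip
  have hinj : ∀ u v : {v : Fin n // v ≠ x}, u ≠ v → p u ≠ p v := by
    intro u v huv hpp
    have h1 := hval u
    have h2 := hval v
    have : (u.1 - x).val = (v.1 - x).val := by simp only [hp] at hpp; omega
    have : u.1 - x = v.1 - x := Fin.ext this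
    have : u.1 = v.1 := by
      have := congrArg (· + x) this
      simpa using this
    exact huv (Subtype.ext this)
  refine ⟨fun v => if p v % 4 = 1 then 2 else if p v % 4 = 3 then 3 else 1, ?_, ?_⟩
  · intro v
    simp only [Finset.mem_Icc]
    split_ifs <;> omega
  · intro u v huv hcc
    rcases eq_or_ne ((deleteVert (cycleGraph n) x).edist u v) ⊤ with htop | htop
    · rw [htop]
      exact ENat.coe_lt_top _
    · have h1 := hpt u v
      have h2 := hpt v u
      rw [SimpleGraph.edist_comm] at h2
      set E := (deleteVert (cycleGraph n) x).edist u v with hE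
      lift E to ℕ using htop with m hm
      have h1' : p v ≤ p u + m := by exact_mod_cast h1
      have h2' : p u ≤ p v + m := by exact_mod_cast h2
      have hne := hinj u v huv
      have goal : (if p u % 4 = 1 then 2 else if p u % 4 = 3 then 3 else 1) < m := by
        beta_reduce at hcc
        split_ifs at hcc ⊢ <;> omega
      exact_mod_cast goal

/-- For every `n ≥ 5` with `n ≢ 0 (mod 4)`, the cycle `C_n` is `4`-`χρ`-critical. -/
theorem stmt_13 (n : ℕ) (hn : 5 ≤ n) (h4 : n % 4 ≠ 0) :
    packingChromatic (cycleGraph n) = 4 ∧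
      ∀ x : Fin n, packingChromatic (deleteVert (cycleGraph n) x) < 4 := by
  have hS4 : (4:ℕ) ∈ {k | ∃ c : Fin n → ℕ, IsPackingColoring (cycleGraph n) k c} :=
    has4 hn h4
  have hlb : ∀ k ∈ {k | ∃ c : Fin n → ℕ, IsPackingColoring (cycleGraph n) k c}, 4 ≤ k := by
    rintro k ⟨c, hm, hd⟩
    by_contra hk
    exact no3 hn h4 c
      ⟨fun v => by have := hm v; simp only [Finset.mem_Icc] at this ⊢; omega, hd⟩
  constructor
  · exact le_antisymm (Nat.sInf_le hS4) (hlb _ (Nat.sInf_mem ⟨4, hS4⟩))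
  · intro x
    have h3 : (3:ℕ) ∈
        {k | ∃ c : {v : Fin n // v ≠ x} → ℕ,
          IsPackingColoring (deleteVert (cycleGraph n) x) k c} := del3 hn x
    have hle : packingChromatic (deleteVert (cycleGraph n) x) ≤ 3 := Nat.sInf_le h3
    omega
end

section
/- Let G_{2k} (k ≥ 3) be the graph obtained from the path P_{2k} with vertices v_1,...,v_{2k} by attaching one additional leaf to v_3 and one additional leaf to v_{2k−2}. Then χρ(G_{2k}) = 4. -/
open SimpleGraph

lemma lipschitz_le_edist {V : Type*} (G : SimpleGraph V) (f : V → ℕ)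
    (hf : ∀ u v, G.Adj u v → f v ≤ f u + 1) (u v : V) :
    (f v : ℕ∞) ≤ (f u : ℕ∞) + G.edist u v := by
  by_cases h : G.edist u v = ⊤
  · simp [h]
  obtain ⟨p, hp⟩ := SimpleGraph.exists_walk_of_edist_ne_top h
  rw [← hp]
  have key : ∀ (a b : V) (p : G.Walk a b), f b ≤ f a + p.length := by
    intro a b p
    induction p with
    | nil => simp
    | @cons a' b' c' h' q ih =>
      have := hf a' b' h'
      simp only [SimpleGraph.Walk.length_cons]
      omega
  exact_mod_cast Nat.cast_le.mpr (key u v p)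

lemma leaf_edist {V : Type*} (G : SimpleGraph V) {w x : V}
    (hx : ∀ y, G.Adj w y → y = x) {v : V} (hv : v ≠ w) :
    G.edist x v + 1 ≤ G.edist w v := by
  by_cases h : G.edist w v = ⊤
  · simp [h]
  obtain ⟨p, hp⟩ := SimpleGraph.exists_walk_of_edist_ne_top h
  cases p with
  | nil => exact absurd rfl hv.symm
  | @cons _ y _ h' q =>
    rw [← hp, ← hx _ h']
    have h1 : G.edist y v ≤ q.length := SimpleGraph.edist_le q
    calc G.edist y v + 1 ≤ (q.length : ℕ∞) + 1 := by gcongr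
    _ = ((Walk.cons h' q).length : ℕ∞) := by
        simp [SimpleGraph.Walk.length_cons]

lemma gap_le_edist {V : Type*} (G : SimpleGraph V) (f : V → ℕ)
    (hf : ∀ u v, G.Adj u v → f v ≤ f u + 1) (u v : V) (m : ℕ)
    (h : f u + m ≤ f v) : (m : ℕ∞) ≤ G.edist u v := by
  have hl := lipschitz_le_edist G f hf u v
  by_contra h'
  push_neg at h'
  have h0 : G.edist u v + 1 ≤ (m : ℕ∞) := Order.add_one_le_of_lt h'
  have h2 : (f v : ℕ∞) + 1 ≤ (f u : ℕ∞) + (m : ℕ∞) := by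
    calc (f v : ℕ∞) + 1 ≤ ((f u : ℕ∞) + G.edist u v) + 1 := by gcongr
    _ = (f u : ℕ∞) + (G.edist u v + 1) := by ring
    _ ≤ (f u : ℕ∞) + (m : ℕ∞) := by gcongr
  have h3 : f v + 1 ≤ f u + m := by exact_mod_cast h2
  omega

lemma gap_lt_edist {V : Type*} (G : SimpleGraph V) (f : V → ℕ)
    (hf : ∀ u v, G.Adj u v → f v ≤ f u + 1) (u v : V) (m : ℕ)
    (h : f u + m < f v) : (m : ℕ∞) < G.edist u v := by
  have h1 : ((m + 1 : ℕ) : ℕ∞) ≤ G.edist u v :=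
    gap_le_edist G f hf u v (m+1) (by omega)
  have h2 : (m : ℕ∞) < ((m + 1 : ℕ) : ℕ∞) := by exact_mod_cast Nat.lt_succ_self m
  exact lt_of_lt_of_le h2 h1

lemma le_edist_leaf {V : Type*} (G : SimpleGraph V) {w x : V}
    (hx : ∀ y, G.Adj w y → y = x) {v : V} (hv : v ≠ w) (m : ℕ)
    (h : (m : ℕ∞) ≤ G.edist x v) : ((m + 1 : ℕ) : ℕ∞) ≤ G.edist w v := by
  have := leaf_edist G hx hv
  calc ((m + 1 : ℕ) : ℕ∞) = (m : ℕ∞) + 1 := by push_cast; ring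
  _ ≤ G.edist x v + 1 := by gcongr
  _ ≤ G.edist w v := this

lemma lt_edist_leaf {V : Type*} (G : SimpleGraph V) {w x : V}
    (hx : ∀ y, G.Adj w y → y = x) {v : V} (hv : v ≠ w) (m : ℕ)
    (h : (m : ℕ∞) ≤ G.edist x v) : (m : ℕ∞) < G.edist w v := by
  have h1 := le_edist_leaf G hx hv m h
  have h2 : (m : ℕ∞) < ((m + 1 : ℕ) : ℕ∞) := by exact_mod_cast Nat.lt_succ_self m
  exact lt_of_lt_of_le h2 h1

def Gk (k : ℕ) : SimpleGraph (Fin (2 * k + 2)) :=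
  SimpleGraph.fromRel (fun i j =>
      (j.val = i.val + 1 ∧ j.val < 2 * k) ∨
      (i.val = 2 ∧ j.val = 2 * k) ∨
      (i.val = 2 * k - 3 ∧ j.val = 2 * k + 1))

def vx (k i : ℕ) : Fin (2 * k + 2) := ⟨min i (2 * k + 1), by omega⟩

lemma vx_val (k i : ℕ) (h : i ≤ 2 * k + 1) : (vx k i).val = i := by
  simp [vx]; omega

lemma vx_ne (k i j : ℕ) (hi : i ≤ 2 * k + 1) (hj : j ≤ 2 * k + 1) (hij : i ≠ j) :
    vx k i ≠ vx k j := by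
  intro h
  apply hij
  have := congrArg Fin.val h
  rwa [vx_val k i hi, vx_val k j hj] at this

lemma Gk_adj (k : ℕ) (u v : Fin (2 * k + 2)) :
    (Gk k).Adj u v ↔ u ≠ v ∧
      ((v.val = u.val + 1 ∧ v.val < 2 * k) ∨ (u.val = 2 ∧ v.val = 2 * k) ∨
        (u.val = 2 * k - 3 ∧ v.val = 2 * k + 1) ∨
       (u.val = v.val + 1 ∧ u.val < 2 * k) ∨ (v.val = 2 ∧ u.val = 2 * k) ∨
        (v.val = 2 * k - 3 ∧ u.val = 2 * k + 1)) := by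
  rw [Gk, SimpleGraph.fromRel_adj]
  tauto

lemma adj_path (k i : ℕ) (h : i + 1 < 2 * k) : (Gk k).Adj (vx k i) (vx k (i + 1)) := by
  rw [Gk_adj]
  refine ⟨vx_ne k i (i+1) (by omega) (by omega) (by omega), Or.inl ?_⟩
  rw [vx_val k i (by omega), vx_val k (i+1) (by omega)]
  omega

lemma adj_A (k : ℕ) (hk : 3 ≤ k) : (Gk k).Adj (vx k 2) (vx k (2 * k)) := by
  rw [Gk_adj]
  refine ⟨vx_ne k 2 (2*k) (by omega) (by omega) (by omega), ?_⟩
  rw [vx_val k 2 (by omega), vx_val k (2*k) (by omega)]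
  omega

lemma adj_B (k : ℕ) (hk : 3 ≤ k) : (Gk k).Adj (vx k (2 * k - 3)) (vx k (2 * k + 1)) := by
  rw [Gk_adj]
  refine ⟨vx_ne k (2*k-3) (2*k+1) (by omega) (by omega) (by omega), ?_⟩
  rw [vx_val k (2*k-3) (by omega), vx_val k (2*k+1) (by omega)]
  omega

lemma nbr_A (k : ℕ) (hk : 3 ≤ k) : ∀ y, (Gk k).Adj (vx k (2 * k)) y → y = vx k 2 := by
  intro y hy
  rw [Gk_adj, vx_val k (2*k) (by omega)] at hy
  have hylt : y.val < 2 * k + 2 := y.isLt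
  have : y.val = 2 := by omega
  apply Fin.ext
  rw [vx_val k 2 (by omega)]
  exact this

lemma nbr_B (k : ℕ) (hk : 3 ≤ k) : ∀ y, (Gk k).Adj (vx k (2 * k + 1)) y → y = vx k (2 * k - 3) := by
  intro y hy
  rw [Gk_adj, vx_val k (2*k+1) (by omega)] at hy
  have hylt : y.val < 2 * k + 2 := y.isLt
  have : y.val = 2 * k - 3 := by omega
  apply Fin.ext
  rw [vx_val k (2*k-3) (by omega)]
  exact this

def fk (k : ℕ) : Fin (2 * k + 2) → ℕ := fun v =>
  if v.val = 2 * k then 2 else if v.val = 2 * k + 1 then 2 * k - 3 else v.val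

lemma fk_lip (k : ℕ) (hk : 3 ≤ k) : ∀ u v, (Gk k).Adj u v → fk k v ≤ fk k u + 1 := by
  intro u v huv
  rw [Gk_adj] at huv
  obtain ⟨-, h⟩ := huv
  have hu : u.val < 2 * k + 2 := u.isLt
  have hv : v.val < 2 * k + 2 := v.isLt
  simp only [fk]
  split_ifs <;> omega

lemma fk_vx (k i : ℕ) (h : i < 2 * k) : fk k (vx k i) = i := by
  simp only [fk, vx_val k i (by omega)]
  split_ifs <;> omega

lemma fk_A (k : ℕ) (hk : 3 ≤ k) : fk k (vx k (2 * k)) = 2 := by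
  simp only [fk, vx_val k (2*k) (by omega)]
  split_ifs <;> omega

lemma fk_B (k : ℕ) (hk : 3 ≤ k) : fk k (vx k (2 * k + 1)) = 2 * k - 3 := by
  simp only [fk, vx_val k (2*k+1) (by omega)]
  split_ifs <;> omega

lemma edist_path_le (k : ℕ) : ∀ t i : ℕ, i + t < 2 * k →
    (Gk k).edist (vx k i) (vx k (i + t)) ≤ (t : ℕ∞) := by
  intro t
  induction t with
  | zero => intro i _; simp [SimpleGraph.edist_self]
  | succ t ih =>
    intro i h
    have h1 := ih i (by omega)
    have h2 : (Gk k).edist (vx k (i + t)) (vx k (i + t + 1)) ≤ 1 := by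
      rw [SimpleGraph.edist_eq_one_iff_adj.mpr (adj_path k (i + t) (by omega))]
    calc (Gk k).edist (vx k i) (vx k (i + (t+1)))
        ≤ (Gk k).edist (vx k i) (vx k (i + t)) + (Gk k).edist (vx k (i + t)) (vx k (i + t + 1)) := by
          rw [show i + (t + 1) = i + t + 1 by omega]
          exact SimpleGraph.edist_triangle
    _ ≤ (t : ℕ∞) + 1 := add_le_add h1 h2
    _ = ((t + 1 : ℕ) : ℕ∞) := by push_cast; ring

lemma edist_path_le' (k i j : ℕ) (hij : i ≤ j) (hj : j < 2 * k) (m : ℕ) (hm : j - i ≤ m) :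
    (Gk k).edist (vx k i) (vx k j) ≤ (m : ℕ∞) := by
  have := edist_path_le k (j - i) i (by omega)
  rw [show i + (j - i) = j by omega] at this
  exact le_trans this (by exact_mod_cast hm)

lemma edist_A_le (k : ℕ) (hk : 3 ≤ k) (j : ℕ) (hj : j < 2 * k) (m : ℕ)
    (hm : (if 2 ≤ j then j - 2 else 2 - j) + 1 ≤ m) :
    (Gk k).edist (vx k (2 * k)) (vx k j) ≤ (m : ℕ∞) := by
  have h1 : (Gk k).edist (vx k (2 * k)) (vx k 2) ≤ 1 := by
    rw [SimpleGraph.edist_comm, SimpleGraph.edist_eq_one_iff_adj.mpr (adj_A k hk)]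
  have h2 : (Gk k).edist (vx k 2) (vx k j) ≤ ((m - 1 : ℕ) : ℕ∞) := by
    rcases le_total 2 j with h | h
    · exact edist_path_le' k 2 j h hj _ (by split_ifs at hm <;> omega)
    · rw [SimpleGraph.edist_comm]
      exact edist_path_le' k j 2 h (by omega) _ (by split_ifs at hm <;> omega)
  calc (Gk k).edist (vx k (2 * k)) (vx k j)
      ≤ (Gk k).edist (vx k (2 * k)) (vx k 2) + (Gk k).edist (vx k 2) (vx k j) :=
        SimpleGraph.edist_triangle
  _ ≤ 1 + ((m - 1 : ℕ) : ℕ∞) := add_le_add h1 h2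
  _ = ((1 + (m - 1) : ℕ) : ℕ∞) := by push_cast; ring
  _ ≤ (m : ℕ∞) := by exact_mod_cast (by omega : 1 + (m - 1) ≤ m)

lemma edist_B_le (k : ℕ) (hk : 3 ≤ k) (j : ℕ) (hj : j < 2 * k) (m : ℕ)
    (hm : (if 2 * k - 3 ≤ j then j - (2 * k - 3) else (2 * k - 3) - j) + 1 ≤ m) :
    (Gk k).edist (vx k (2 * k + 1)) (vx k j) ≤ (m : ℕ∞) := by
  have h1 : (Gk k).edist (vx k (2 * k + 1)) (vx k (2 * k - 3)) ≤ 1 := by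
    rw [SimpleGraph.edist_comm, SimpleGraph.edist_eq_one_iff_adj.mpr (adj_B k hk)]
  have h2 : (Gk k).edist (vx k (2 * k - 3)) (vx k j) ≤ ((m - 1 : ℕ) : ℕ∞) := by
    rcases le_total (2 * k - 3) j with h | h
    · exact edist_path_le' k (2*k-3) j h hj _ (by split_ifs at hm <;> omega)
    · rw [SimpleGraph.edist_comm]
      exact edist_path_le' k j (2*k-3) h (by omega) _ (by split_ifs at hm <;> omega)
  calc (Gk k).edist (vx k (2 * k + 1)) (vx k j)
      ≤ (Gk k).edist (vx k (2 * k + 1)) (vx k (2 * k - 3)) + (Gk k).edist (vx k (2 * k - 3)) (vx k j) :=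
        SimpleGraph.edist_triangle
  _ ≤ 1 + ((m - 1 : ℕ) : ℕ∞) := add_le_add h1 h2
  _ = ((1 + (m - 1) : ℕ) : ℕ∞) := by push_cast; ring
  _ ≤ (m : ℕ∞) := by exact_mod_cast (by omega : 1 + (m - 1) ≤ m)

lemma no_three (k : ℕ) (hk : 3 ≤ k) (c : Fin (2 * k + 2) → ℕ) :
    ¬ IsPackingColoring (Gk k) 3 c := by
  rintro ⟨hmem, hpack⟩
  have hdr : ∀ i : ℕ, 1 ≤ c (vx k i) ∧ c (vx k i) ≤ 3 := by
    intro i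
    have := hmem (vx k i)
    simpa [Finset.mem_Icc] using this
  have contra : ∀ (u v : Fin (2 * k + 2)) (m : ℕ), u ≠ v → (Gk k).edist u v ≤ (m : ℕ∞) →
      c u = c v → m ≤ c u → False := by
    intro u v m hne hle hcc hm
    have h1 := hpack u v hne hcc
    have h2 : (c u : ℕ∞) < (m : ℕ∞) := lt_of_lt_of_le h1 hle
    have : c u < m := by exact_mod_cast h2
    omega
  have pathNe : ∀ i j : ℕ, i < j → j < 2 * k → c (vx k i) = c (vx k j) →
      j - i ≤ c (vx k i) → False := by
    intro i j hij hj hcc hm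
    exact contra (vx k i) (vx k j) (j - i)
      (vx_ne k i j (by omega) (by omega) (by omega))
      (edist_path_le' k i j (by omega) hj _ le_rfl) hcc hm
  have ANe : ∀ j m : ℕ, j < 2 * k → (if 2 ≤ j then j - 2 else 2 - j) + 1 ≤ m →
      c (vx k (2 * k)) = c (vx k j) → m ≤ c (vx k (2 * k)) → False := by
    intro j m hj hm hcc hma
    exact contra (vx k (2 * k)) (vx k j) m
      (vx_ne k (2 * k) j (by omega) (by omega) (by omega))
      (edist_A_le k hk j hj m hm) hcc hma
  have BNe : ∀ j m : ℕ, j < 2 * k →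
      (if 2 * k - 3 ≤ j then j - (2 * k - 3) else (2 * k - 3) - j) + 1 ≤ m →
      c (vx k (2 * k + 1)) = c (vx k j) → m ≤ c (vx k (2 * k + 1)) → False := by
    intro j m hj hm hcc hma
    exact contra (vx k (2 * k + 1)) (vx k j) m
      (vx_ne k (2 * k + 1) j (by omega) (by omega) (by omega))
      (edist_B_le k hk j hj m hm) hcc hma
  have har := hdr (2 * k)
  -- Step 1 : c (vx k 2) ≠ 1
  have step1 : c (vx k 2) ≠ 1 := by
    intro h2
    have hd1 := hdr 1; have hd3 := hdr 3
    have h1ne : c (vx k 1) ≠ 1 := by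
      intro h
      exact pathNe 1 2 (by omega) (by omega) (by rw [h, h2]) (by omega)
    have h3ne : c (vx k 3) ≠ 1 := by
      intro h
      exact pathNe 2 3 (by omega) (by omega) (by rw [h, h2]) (by omega)
    have hane : c (vx k (2 * k)) ≠ 1 := by
      intro h
      exact ANe 2 1 (by omega) (by norm_num) (by rw [h, h2]) (by omega)
    have h13 : c (vx k 1) ≠ c (vx k 3) := fun h =>
      pathNe 1 3 (by omega) (by omega) h (by omega)
    have h1A : c (vx k (2 * k)) ≠ c (vx k 1) := fun h =>
      ANe 1 2 (by omega) (by norm_num) h (by omega)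
    have h3A : c (vx k (2 * k)) ≠ c (vx k 3) := fun h =>
      ANe 3 2 (by omega) (by norm_num) h (by omega)
    omega
  -- Step 2 : c (vx k 3) = 1
  have step2 : c (vx k 3) = 1 := by
    by_contra h3
    have hd2 := hdr 2; have hd3 := hdr 3
    have h23 : c (vx k 2) ≠ c (vx k 3) := fun h =>
      pathNe 2 3 (by omega) (by omega) h (by omega)
    have hcases : (c (vx k 2) = 3 ∧ c (vx k 3) = 2) ∨ (c (vx k 2) = 2 ∧ c (vx k 3) = 3) := by
      omega
    rcases hcases with ⟨e2, e3⟩ | ⟨e2, e3⟩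
    · have hd4 := hdr 4; have hd5 := hdr 5
      have h34 : c (vx k 3) ≠ c (vx k 4) := fun h =>
        pathNe 3 4 (by omega) (by omega) h (by omega)
      have h24 : c (vx k 2) ≠ c (vx k 4) := fun h =>
        pathNe 2 4 (by omega) (by omega) h (by omega)
      have h45 : c (vx k 4) ≠ c (vx k 5) := fun h =>
        pathNe 4 5 (by omega) (by omega) h (by omega)
      have h35 : c (vx k 3) ≠ c (vx k 5) := fun h =>
        pathNe 3 5 (by omega) (by omega) h (by omega)
      have h25 : c (vx k 2) ≠ c (vx k 5) := fun h =>
        pathNe 2 5 (by omega) (by omega) h (by omega)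
      omega
    · have hd1 := hdr 1; have hd0 := hdr 0
      have h12 : c (vx k 1) ≠ c (vx k 2) := fun h =>
        pathNe 1 2 (by omega) (by omega) h (by omega)
      have h13 : c (vx k 1) ≠ c (vx k 3) := fun h =>
        pathNe 1 3 (by omega) (by omega) h (by omega)
      have h01 : c (vx k 0) ≠ c (vx k 1) := fun h =>
        pathNe 0 1 (by omega) (by omega) h (by omega)
      have h02 : c (vx k 0) ≠ c (vx k 2) := fun h =>
        pathNe 0 2 (by omega) (by omega) h (by omega)
      have h03 : c (vx k 0) ≠ c (vx k 3) := fun h =>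
        pathNe 0 3 (by omega) (by omega) h (by omega)
      omega
  -- Step 3 : invariant
  have main : ∀ m : ℕ, 2 + 2 * m ≤ 2 * k - 4 →
      c (vx k (2 + 2 * m)) ≠ 1 ∧ c (vx k (3 + 2 * m)) = 1 ∧ c (vx k (4 + 2 * m)) ≠ 1 := by
    intro m
    induction m with
    | zero =>
      intro _
      refine ⟨by simpa using step1, by simpa using step2, ?_⟩
      intro h4
      exact pathNe 3 4 (by omega) (by omega) (by rw [step2]; simpa using h4.symm) (by omega)
    | succ m ih =>
      intro hm
      obtain ⟨hx, h1, hy⟩ := ih (by omega)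
      rw [show 2 + 2 * (m + 1) = 4 + 2 * m from by ring,
        show 3 + 2 * (m + 1) = 5 + 2 * m from by ring,
        show 4 + 2 * (m + 1) = 6 + 2 * m from by ring]
      have hdx := hdr (2 + 2 * m); have hdy := hdr (4 + 2 * m)
      have hd5 := hdr (5 + 2 * m); have hd6 := hdr (6 + 2 * m); have hd7 := hdr (7 + 2 * m)
      have hxy : c (vx k (2 + 2 * m)) ≠ c (vx k (4 + 2 * m)) := fun h =>
        pathNe (2 + 2 * m) (4 + 2 * m) (by omega) (by omega) h (by omega)
      have h5 : c (vx k (5 + 2 * m)) = 1 := by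
        by_contra h5
        have hA : c (vx k (4 + 2 * m)) ≠ c (vx k (5 + 2 * m)) := fun h =>
          pathNe (4 + 2 * m) (5 + 2 * m) (by omega) (by omega) h (by omega)
        rcases (by omega : c (vx k (2 + 2 * m)) = 3 ∨
            (c (vx k (2 + 2 * m)) = 2 ∧ c (vx k (4 + 2 * m)) = 3)) with e | ⟨e, e'⟩
        · have hB : c (vx k (2 + 2 * m)) ≠ c (vx k (5 + 2 * m)) := fun h =>
            pathNe (2 + 2 * m) (5 + 2 * m) (by omega) (by omega) h (by omega)
          omega
        · have hC : c (vx k (5 + 2 * m)) = 2 := by omega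
          have h56 : c (vx k (5 + 2 * m)) ≠ c (vx k (6 + 2 * m)) := fun h =>
            pathNe (5 + 2 * m) (6 + 2 * m) (by omega) (by omega) h (by omega)
          have h46 : c (vx k (4 + 2 * m)) ≠ c (vx k (6 + 2 * m)) := fun h =>
            pathNe (4 + 2 * m) (6 + 2 * m) (by omega) (by omega) h (by omega)
          have h67 : c (vx k (6 + 2 * m)) ≠ c (vx k (7 + 2 * m)) := fun h =>
            pathNe (6 + 2 * m) (7 + 2 * m) (by omega) (by omega) h (by omega)
          have h57 : c (vx k (5 + 2 * m)) ≠ c (vx k (7 + 2 * m)) := fun h =>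
            pathNe (5 + 2 * m) (7 + 2 * m) (by omega) (by omega) h (by omega)
          have h47 : c (vx k (4 + 2 * m)) ≠ c (vx k (7 + 2 * m)) := fun h =>
            pathNe (4 + 2 * m) (7 + 2 * m) (by omega) (by omega) h (by omega)
          omega
      have h6 : c (vx k (6 + 2 * m)) ≠ 1 := by
        intro h
        exact pathNe (5 + 2 * m) (6 + 2 * m) (by omega) (by omega) (by rw [h5, h]) (by omega)
      exact ⟨hy, h5, h6⟩
  -- Endgame
  have fin := main (k - 3) (by omega)
  rw [show 2 + 2 * (k - 3) = 2 * k - 4 from by omega,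
    show 3 + 2 * (k - 3) = 2 * k - 3 from by omega,
    show 4 + 2 * (k - 3) = 2 * k - 2 from by omega] at fin
  obtain ⟨g1, g2, g3⟩ := fin
  have hbr := hdr (2 * k + 1)
  have hdx := hdr (2 * k - 4); have hdy := hdr (2 * k - 2)
  have hb1 : c (vx k (2 * k + 1)) ≠ 1 := by
    intro h
    exact BNe (2 * k - 3) 1 (by omega) (by split_ifs <;> omega) (by rw [h, g2]) (by omega)
  have hbx : c (vx k (2 * k + 1)) ≠ c (vx k (2 * k - 4)) := fun h =>
    BNe (2 * k - 4) 2 (by omega) (by split_ifs <;> omega) h (by omega)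
  have hby : c (vx k (2 * k + 1)) ≠ c (vx k (2 * k - 2)) := fun h =>
    BNe (2 * k - 2) 2 (by omega) (by split_ifs <;> omega) h (by omega)
  have hxy : c (vx k (2 * k - 4)) ≠ c (vx k (2 * k - 2)) := fun h =>
    pathNe (2 * k - 4) (2 * k - 2) (by omega) (by omega) h (by omega)
  omega

def colk (k : ℕ) : Fin (2 * k + 2) → ℕ := fun v =>
  if v.val = 2 * k then 4
  else if v.val = 2 * k + 1 then (if k % 2 = 0 then 4 else 2)
  else if v.val % 2 = 0 then 1 else if v.val % 4 = 1 then 2 else 3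

lemma fk_val (k : ℕ) (v : Fin (2 * k + 2)) (h : v.val < 2 * k) : fk k v = v.val := by
  simp only [fk]; split_ifs <;> omega

lemma vx_eq (k : ℕ) (v : Fin (2 * k + 2)) : vx k v.val = v := by
  apply Fin.ext
  rw [vx_val k v.val (by omega)]

lemma upper (k : ℕ) (hk : 3 ≤ k) : IsPackingColoring (Gk k) 4 (colk k) := by
  constructor
  · intro v
    simp only [Finset.mem_Icc, colk]
    split_ifs <;> omega
  · have key : ∀ u v : Fin (2 * k + 2), u.val < v.val → colk k u = colk k v →
        (colk k u : ℕ∞) < (Gk k).edist u v := by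
      intro u v hlt hcc
      have hu2 : u.val < 2 * k + 2 := u.isLt
      have hv2 : v.val < 2 * k + 2 := v.isLt
      rcases (by omega : v.val < 2 * k ∨ v.val = 2 * k ∨ v.val = 2 * k + 1) with hv | hv | hv
      · -- path-path
        apply gap_lt_edist (Gk k) (fk k) (fk_lip k hk)
        rw [fk_val k u (by omega), fk_val k v (by omega)]
        simp only [colk] at hcc ⊢
        split_ifs at hcc ⊢ <;> omega
      · -- v = A, u on path
        exfalso
        simp only [colk] at hcc
        split_ifs at hcc <;> omega
      · -- v = B
        rcases (by omega : u.val < 2 * k ∨ u.val = 2 * k) with hu | hu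
        · -- u path, v = B
          by_cases hkp : k % 2 = 0
          · exfalso
            simp only [colk] at hcc
            split_ifs at hcc <;> omega
          · have hcu : colk k u = 2 := by
              simp only [colk] at hcc ⊢
              split_ifs at hcc ⊢ <;> omega
            have hu4 : u.val % 4 = 1 := by
              simp only [colk] at hcu
              split_ifs at hcu <;> omega
            have hq4 : (2 * k - 3) % 4 = 3 := by omega
            rw [hcu]
            have hvB : v = vx k (2 * k + 1) := by
              apply Fin.ext; rw [vx_val k (2*k+1) (by omega), hv]
            rw [hvB, SimpleGraph.edist_comm]
            have hune : u ≠ vx k (2 * k + 1) := by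
              intro h
              have := congrArg Fin.val h
              rw [vx_val k (2*k+1) (by omega)] at this
              omega
            apply lt_edist_leaf (Gk k) (nbr_B k hk) hune
            rcases le_or_gt u.val (2 * k - 3) with hle | hgt
            · rw [SimpleGraph.edist_comm]
              have := gap_le_edist (Gk k) (fk k) (fk_lip k hk) u (vx k (2*k-3)) 2 (by
                rw [fk_val k u (by omega), fk_vx k (2*k-3) (by omega)]
                omega)
              exact this
            · apply gap_le_edist (Gk k) (fk k) (fk_lip k hk)
              rw [fk_val k u (by omega), fk_vx k (2*k-3) (by omega)]
              omega
        · -- u = A, v = B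
          have hke : k % 2 = 0 := by
            simp only [colk] at hcc
            split_ifs at hcc <;> omega
          have hcu : colk k u = 4 := by
            simp only [colk]; split_ifs <;> omega
          have huA : u = vx k (2 * k) := by
            apply Fin.ext; rw [vx_val k (2*k) (by omega), hu]
          have hvB : v = vx k (2 * k + 1) := by
            apply Fin.ext; rw [vx_val k (2*k+1) (by omega), hv]
          have h1 : ((2 * k - 5 : ℕ) : ℕ∞) ≤ (Gk k).edist (vx k (2*k-3)) (vx k 2) := by
            rw [SimpleGraph.edist_comm]
            apply gap_le_edist (Gk k) (fk k) (fk_lip k hk)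
            rw [fk_vx k 2 (by omega), fk_vx k (2*k-3) (by omega)]
            omega
          have h2 := le_edist_leaf (Gk k) (nbr_B k hk)
            (vx_ne k 2 (2*k+1) (by omega) (by omega) (by omega)) (2*k-5) h1
          rw [SimpleGraph.edist_comm] at h2
          have h3 := le_edist_leaf (Gk k) (nbr_A k hk)
            (vx_ne k (2*k+1) (2*k) (by omega) (by omega) (by omega)) (2*k-5+1) h2
          rw [hcu, huA, hvB]
          calc ((4:ℕ) : ℕ∞) < ((2*k-5+1+1 : ℕ) : ℕ∞) := by exact_mod_cast (by omega : 4 < 2*k-5+1+1)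
          _ ≤ _ := h3
    intro u v hne hcc
    rcases lt_trichotomy u.val v.val with h | h | h
    · exact key u v h hcc
    · exact absurd (Fin.ext h) hne
    · rw [SimpleGraph.edist_comm, hcc]
      exact key v u h hcc.symm

/-- Let `G_{2k}` (`k ≥ 3`) be obtained from the path `P_{2k}` on vertices
`0,…,2k−1` by attaching a leaf (vertex `2k`) to the vertex at distance `2`
from one end (index `2`) and a leaf (vertex `2k+1`) to the vertex at distance
`2` from the other end (index `2k−3`). Then `χρ(G_{2k}) = 4`. -/
theorem stmt_14 (k : ℕ) (hk : 3 ≤ k) (G : SimpleGraph (Fin (2 * k + 2)))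
    (hG : G = SimpleGraph.fromRel (fun i j =>
      (j.val = i.val + 1 ∧ j.val < 2 * k) ∨
      (i.val = 2 ∧ j.val = 2 * k) ∨
      (i.val = 2 * k - 3 ∧ j.val = 2 * k + 1))) :
    packingChromatic G = 4 := by
  subst hG
  have hup := upper k hk
  have key : packingChromatic (Gk k) = 4 := by
    unfold packingChromatic
    apply le_antisymm
    · exact Nat.sInf_le ⟨colk k, hup⟩
    · by_contra hlt
      push_neg at hlt
      obtain ⟨c, hc⟩ := Nat.sInf_mem
        (⟨4, colk k, hup⟩ : {m | ∃ c, IsPackingColoring (Gk k) m c}.Nonempty)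
      refine no_three k hk c ⟨fun v => ?_, hc.2⟩
      have h := hc.1 v
      simp only [Finset.mem_Icc] at h ⊢
      omega
  exact key
end

section
/- The path P_9 on 9 vertices admits no (2,3,4,5)-packing coloring; that is, the vertex set of P_9 cannot be partitioned into four sets X_2, X_3, X_4, X_5 where X_i is an i-packing. -/
open SimpleGraph

lemma path9_edist_le : ∀ (k : ℕ) (a b : Fin 9), a.val + k = b.val →
    (pathGraph 9).edist a b ≤ (k : ℕ∞) := by
  intro k
  induction k with
  | zero =>
    intro a b h
    have : a = b := Fin.ext (by omega)
    simp [this]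
  | succ k ih =>
    intro a b h
    have hlt : a.val + 1 < 9 := by omega
    set m : Fin 9 := ⟨a.val + 1, hlt⟩ with hm
    have hadj : (pathGraph 9).Adj a m := pathGraph_adj.mpr (Or.inl rfl)
    have h1 : (pathGraph 9).edist a m ≤ 1 := by
      simpa using hadj.toWalk.edist_le
    have h2 : (pathGraph 9).edist m b ≤ (k : ℕ∞) := ih m b (by simp [hm]; omega)
    calc (pathGraph 9).edist a b ≤ _ + _ := SimpleGraph.edist_triangle (v := m)
      _ ≤ 1 + (k : ℕ∞) := add_le_add h1 h2
      _ = ((k+1 : ℕ) : ℕ∞) := by push_cast; ring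

/-- Pruned DFS over packing colorings of a path, tracking for each color the
gap since its last occurrence. -/
def pcOk : ℕ → ℕ → ℕ → ℕ → ℕ → Bool
  | 0, _, _, _, _ => true
  | n+1, g2, g3, g4, g5 =>
    (decide (2 < g2) && pcOk n 1 (g3+1) (g4+1) (g5+1)) ||
    (decide (3 < g3) && pcOk n (g2+1) 1 (g4+1) (g5+1)) ||
    (decide (4 < g4) && pcOk n (g2+1) (g3+1) 1 (g5+1)) ||
    (decide (5 < g5) && pcOk n (g2+1) (g3+1) (g4+1) 1)

lemma pcOk_false : pcOk 9 9 9 9 9 = false := by decide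

/-- The path `P₉` admits no `(2,3,4,5)`-packing coloring. -/
theorem stmt_15 :
    ¬ ∃ c : Fin 9 → ℕ, (∀ v, c v ∈ ({2, 3, 4, 5} : Set ℕ)) ∧
      ∀ u v : Fin 9, u ≠ v → c u = c v →
        (c u : ℕ∞) < (pathGraph 9).edist u v := by
  rintro ⟨c, hmem, hval⟩
  -- from validity: same color i at positions u < v forces i < v - u
  have key : ∀ u v : Fin 9, u.val < v.val → c u = c v → c u < v.val - u.val := by
    intro u v huv hc
    have hne : u ≠ v := by intro h; subst h; omega
    have h1 : (c u : ℕ∞) < (pathGraph 9).edist u v := hval u v hne hc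
    have h2 : (pathGraph 9).edist u v ≤ ((v.val - u.val : ℕ) : ℕ∞) :=
      path9_edist_le (v.val - u.val) u v (by omega)
    have := lt_of_lt_of_le h1 h2
    exact_mod_cast this
  -- invariant for the gap parameter of color i at position p
  set Inv : ℕ → ℕ → ℕ → Prop := fun i g p =>
    6 ≤ g ∨ ∃ u : Fin 9, u.val < p ∧ c u = i ∧ u.val + g = p with hInv
  have step : ∀ (n : ℕ) (g2 g3 g4 g5 p : ℕ), p + n = 9 →
      Inv 2 g2 p → Inv 3 g3 p → Inv 4 g4 p → Inv 5 g5 p →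
      pcOk n g2 g3 g4 g5 = true := by
    intro n
    induction n with
    | zero => intro _ _ _ _ _ _ _ _ _ _; rfl
    | succ n ih =>
      intro g2 g3 g4 g5 p hp h2 h3 h4 h5
      have hp9 : p < 9 := by omega
      set w : Fin 9 := ⟨p, hp9⟩ with hw
      -- the guard for the color of w holds
      have guard : ∀ i g, Inv i g p → c w = i → i < g := by
        intro i g hi hcw
        rcases hi with hg | ⟨u, hu, hcu, hug⟩
        · have := hmem w
          simp only [hcw, Set.mem_insert_iff, Set.mem_singleton_iff] at this
          omega
        · have := key u w (by simpa [hw] using hu) (by rw [hcu, hcw])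
          rw [hcu] at this
          simp only [hw] at this
          omega
      -- invariant is preserved for colors not placed at w
      have keep : ∀ i g, Inv i g p → c w ≠ i → Inv i (g+1) (p+1) := by
        intro i g hi hcw
        rcases hi with hg | ⟨u, hu, hcu, hug⟩
        · exact Or.inl (by omega)
        · exact Or.inr ⟨u, by omega, hcu, by omega⟩
      -- invariant for the placed color
      have put : ∀ i, c w = i → Inv i 1 (p+1) :=
        fun i hi => Or.inr ⟨w, by simp [hw], hi, by simp [hw]⟩
      have hcw := hmem w
      simp only [Set.mem_insert_iff, Set.mem_singleton_iff] at hcw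
      show pcOk (n+1) g2 g3 g4 g5 = true
      rw [pcOk]
      simp only [Bool.or_eq_true, Bool.and_eq_true, decide_eq_true_eq]
      rcases hcw with h | h | h | h
      · exact Or.inl (Or.inl (Or.inl ⟨guard 2 g2 h2 h,
          ih 1 (g3+1) (g4+1) (g5+1) (p+1) (by omega) (put 2 h)
            (keep 3 g3 h3 (by omega)) (keep 4 g4 h4 (by omega)) (keep 5 g5 h5 (by omega))⟩))
      · exact Or.inl (Or.inl (Or.inr ⟨guard 3 g3 h3 h,
          ih (g2+1) 1 (g4+1) (g5+1) (p+1) (by omega) (keep 2 g2 h2 (by omega)) (put 3 h)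
            (keep 4 g4 h4 (by omega)) (keep 5 g5 h5 (by omega))⟩))
      · exact Or.inl (Or.inr ⟨guard 4 g4 h4 h,
          ih (g2+1) (g3+1) 1 (g5+1) (p+1) (by omega) (keep 2 g2 h2 (by omega))
            (keep 3 g3 h3 (by omega)) (put 4 h) (keep 5 g5 h5 (by omega))⟩)
      · exact Or.inr ⟨guard 5 g5 h5 h,
          ih (g2+1) (g3+1) (g4+1) 1 (p+1) (by omega) (keep 2 g2 h2 (by omega))
            (keep 3 g3 h3 (by omega)) (keep 4 g4 h4 (by omega)) (put 5 h)⟩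
  have := step 9 9 9 9 9 0 rfl (Or.inl (by omega)) (Or.inl (by omega))
    (Or.inl (by omega)) (Or.inl (by omega))
  rw [pcOk_false] at this
  exact Bool.false_ne_true this
end

section
/- For every integer k ≥ 2 there exists a k-χρ-critical tree. -/
open SimpleGraph

section Aux

variable {V : Type*} {W : Type*} {G : SimpleGraph V} {H : SimpleGraph W}

private lemma edist_hom (f : G →g H) (u v : V) :
    H.edist (f u) (f v) ≤ G.edist u v := by
  rw [SimpleGraph.edist_eq_sInf (G := G)]
  refine le_sInf ?_
  rintro _ ⟨p, rfl⟩
  exact (SimpleGraph.edist_le (p.map f)).trans_eq (by simp)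

private lemma edist_iso (e : G ≃g H) (u v : V) :
    H.edist (e u) (e v) = G.edist u v := by
  refine le_antisymm (edist_hom e.toHom u v) ?_
  have h := edist_hom e.symm.toHom (e u) (e v)
  simpa using h

private lemma IsPackingColoring.mono {k k' : ℕ} {c : V → ℕ}
    (h : IsPackingColoring G k c) (hk : k ≤ k') : IsPackingColoring G k' c := by
  refine ⟨fun v => ?_, h.2⟩
  have hv := h.1 v
  simp only [Finset.mem_Icc] at hv ⊢
  omega

private lemma exists_packingColoring_card [Fintype V] (G : SimpleGraph V) :
    ∃ c, IsPackingColoring G (Fintype.card V) c := by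
  refine ⟨fun v => (Fintype.equivFin V v : ℕ) + 1, fun v => ?_, fun u v huv hc => ?_⟩
  · simp only [Finset.mem_Icc]
    have := (Fintype.equivFin V v).isLt
    omega
  · exfalso
    apply huv
    dsimp only at hc
    have h : (Fintype.equivFin V u : ℕ) = (Fintype.equivFin V v : ℕ) := by omega
    exact (Fintype.equivFin V).injective (Fin.ext h)

private lemma packingChromatic_le_of_exists {k : ℕ} (h : ∃ c, IsPackingColoring G k c) :
    packingChromatic G ≤ k := Nat.sInf_le h

private lemma exists_packingColoring_packingChromatic [Fintype V] (G : SimpleGraph V) :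
    ∃ c, IsPackingColoring G (packingChromatic G) c := by
  have h : packingChromatic G ∈ {k | ∃ c : V → ℕ, IsPackingColoring G k c} :=
    Nat.sInf_mem ⟨Fintype.card V, exists_packingColoring_card G⟩
  exact h

private lemma exists_packingColoring_of_le [Fintype V] {k : ℕ}
    (h : packingChromatic G ≤ k) : ∃ c, IsPackingColoring G k c :=
  (exists_packingColoring_packingChromatic G).imp fun _ hc => hc.mono h

private lemma packingChromatic_le_of_iso [Fintype W] (e : G ≃g H) :
    packingChromatic G ≤ packingChromatic H := by
  obtain ⟨c, hc⟩ := exists_packingColoring_packingChromatic H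
  refine packingChromatic_le_of_exists
    ⟨fun v => c (e v), fun v => hc.1 (e v), fun u v huv hcc => ?_⟩
  have h2 := hc.2 (e u) (e v) (fun hh => huv (e.injective hh)) hcc
  rwa [edist_iso e u v] at h2

private lemma packingChromatic_iso [Fintype V] [Fintype W] (e : G ≃g H) :
    packingChromatic G = packingChromatic H :=
  le_antisymm (packingChromatic_le_of_iso e) (packingChromatic_le_of_iso e.symm)

private lemma exists_walk_induce {s : Set V} :
    ∀ {u v : V} (p : G.Walk u v), (∀ w ∈ p.support, w ∈ s) → ∀ (hu : u ∈ s) (hv : v ∈ s),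
      ∃ q : (G.induce s).Walk ⟨u, hu⟩ ⟨v, hv⟩, q.length = p.length := by
  intro u v p
  induction p with
  | nil => exact fun _ hu hv => ⟨Walk.nil, rfl⟩
  | @cons a b c hadj p ih =>
    intro hs ha hc
    have hb : b ∈ s := hs b (by simp)
    obtain ⟨q, hq⟩ := ih (fun w hw => hs w (by simp [hw])) hb hc
    exact ⟨Walk.cons (by simpa using hadj) q, by simp [hq]⟩

private lemma edist_induce_le {s : Set V} (hclosed : ∀ u w, u ∈ s → G.Reachable u w → w ∈ s)
    {u v : V} (hu : u ∈ s) (hv : v ∈ s) :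
    (G.induce s).edist ⟨u, hu⟩ ⟨v, hv⟩ ≤ G.edist u v := by
  classical
  rw [SimpleGraph.edist_eq_sInf (G := G)]
  refine le_sInf ?_
  rintro _ ⟨p, rfl⟩
  have hsupp : ∀ w ∈ p.support, w ∈ s := fun w hw =>
    hclosed u w hu ⟨p.takeUntil w hw⟩
  obtain ⟨q, hq⟩ := exists_walk_induce p hsupp hu hv
  exact (SimpleGraph.edist_le q).trans_eq (by rw [hq])

private def induceEmbedding (G : SimpleGraph V) (s : Set V) : G.induce s ↪g G :=
  SimpleGraph.Embedding.comap (Function.Embedding.subtype _) G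

private lemma isAcyclic_of_embedding (f : G ↪g H) (h : H.IsAcyclic) : G.IsAcyclic :=
  fun _ c hc =>
    h (c.map f.toHom) ((Walk.map_isCycle_iff_of_injective f.injective).mpr hc)

end Aux

section Cyc
variable {V : Type*} {G : SimpleGraph V}

private lemma cycle_start {w : V} (d : G.Walk w w) (hd : d.IsCycle) :
    ∃ a b, a ≠ b ∧ G.Adj w a ∧ G.Adj w b ∧ a ∈ d.support ∧ b ∈ d.support := by
  have hlen := hd.three_le_length
  cases d with
  | nil => exact absurd hd Walk.IsCycle.not_of_nil
  | @cons _ a _ hadj p =>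
    obtain ⟨hp_path, hedge⟩ := (Walk.cons_isCycle_iff p hadj).mp hd
    have hplen : 2 ≤ p.length := by
      simp only [Walk.length_cons] at hlen; omega
    cases hrev : p.reverse with
    | nil =>
      have := congrArg Walk.length hrev
      simp only [Walk.length_reverse, Walk.length_nil] at this
      omega
    | @cons _ b _ hadj2 q =>
      have hbsupp : b ∈ p.support := by
        have h1 : b ∈ p.reverse.support := by
          rw [hrev]; simp [Walk.support_cons]
        rwa [Walk.support_reverse, List.mem_reverse] at h1
      refine ⟨a, b, ?_, hadj, hadj2, by simp, by simp [hbsupp]⟩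
      rintro rfl
      apply hedge
      have : s(w, a) ∈ p.reverse.edges := by rw [hrev]; simp
      rwa [Walk.edges_reverse, List.mem_reverse] at this

private lemma isAcyclic_parent (par : V → V) (r : V → ℕ)
    (hadj : ∀ u v, G.Adj u v → (par u = v ∧ r v < r u) ∨ (par v = u ∧ r u < r v)) :
    G.IsAcyclic := by
  classical
  intro v c hc
  obtain ⟨w, hwmem⟩ : ∃ w, w ∈ c.support.argmax r := by
    cases h : c.support.argmax r with
    | none =>
      exact absurd (List.argmax_eq_none.mp h) c.support_ne_nil
    | some w => exact ⟨w, by simp [h, Option.mem_def]⟩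
  have hw : w ∈ c.support := List.argmax_mem hwmem
  have hc' := hc.rotate hw
  have hmemsub : ∀ x, x ∈ (c.rotate w hw).support → x ∈ c.support := by
    intro x hx
    have hperm := Walk.support_rotate c w hw
    rw [Walk.support_eq_cons] at hx
    rcases List.mem_cons.mp hx with rfl | hx'
    · exact hw
    · have := hperm.mem_iff.mp hx'
      rw [Walk.support_eq_cons c]
      exact List.mem_cons_of_mem _ this
  obtain ⟨a, b, hab, ha, hb, hamem, hbmem⟩ := cycle_start (c.rotate w hw) hc'
  have hmax : ∀ x ∈ c.support, r x ≤ r w := fun x hx => List.le_of_mem_argmax hx hwmem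
  have h1 : par w = a := by
    rcases hadj w a ha with ⟨h, _⟩ | ⟨_, hlt⟩
    · exact h
    · exact absurd hlt (not_lt.mpr (hmax a (hmemsub a hamem)))
  have h2 : par w = b := by
    rcases hadj w b hb with ⟨h, _⟩ | ⟨_, hlt⟩
    · exact h
    · exact absurd hlt (not_lt.mpr (hmax b (hmemsub b hbmem)))
  exact hab (h1 ▸ h2)

end Cyc

section Star
variable (m : ℕ)

private abbrev StarV (m : ℕ) := Option (Fin m × Option (Fin m))

private def parentFn : StarV m → StarV m
  | none => none
  | some (_, none) => none
  | some (j, some _) => some (j, none)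

private def rankFn : StarV m → ℕ
  | none => 0
  | some (_, none) => 1
  | some (_, some _) => 2

private def starTree : SimpleGraph (StarV m) :=
  SimpleGraph.fromRel (fun u v => parentFn m u = v)

private lemma starTree_adj {u v : StarV m} :
    (starTree m).Adj u v ↔ u ≠ v ∧ (parentFn m u = v ∨ parentFn m v = u) := by
  simp [starTree]

private lemma starTree_isTree : (starTree m).IsTree := by
  constructor
  · -- connected
    have hreach : ∀ u : StarV m, (starTree m).Reachable u none := by
      rintro (_ | ⟨j, _ | i⟩)
      · exact Reachable.refl _
      · exact Adj.reachable ((starTree_adj m).mpr ⟨by simp [parentFn], Or.inl rfl⟩)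
      · exact (Adj.reachable ((starTree_adj m).mpr ⟨by simp [parentFn], Or.inl rfl⟩)).trans
          (Adj.reachable ((starTree_adj m).mpr ⟨by simp [parentFn], Or.inl rfl⟩))
    exact ⟨fun u v => (hreach u).trans (hreach v).symm⟩
  · refine isAcyclic_parent (parentFn m) (rankFn m) ?_
    intro u v huv
    rw [starTree_adj] at huv
    obtain ⟨hne, h | h⟩ := huv
    · left
      refine ⟨h, ?_⟩
      subst h
      rcases u with _ | ⟨j, _ | i⟩
      · exact absurd rfl hne
      · simp [parentFn, rankFn]
      · simp [parentFn, rankFn]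
    · right
      refine ⟨h, ?_⟩
      subst h
      rcases v with _ | ⟨j, _ | i⟩
      · exact absurd rfl hne.symm
      · simp [parentFn, rankFn]
      · simp [parentFn, rankFn]

private lemma starTree_chi (hm : 1 ≤ m) : m + 1 ≤ packingChromatic (starTree m) := by
  by_contra hcon
  push_neg at hcon
  obtain ⟨c, hc⟩ := exists_packingColoring_of_le (G := starTree m) (k := m)
    (Nat.lt_succ_iff.mp hcon)
  have hcpos : ∀ v, 1 ≤ c v ∧ c v ≤ m := by
    intro v; have := hc.1 v; simpa [Finset.mem_Icc] using this
  -- adjacent vertices get distinct colors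
  have hadj_ne : ∀ u v, (starTree m).Adj u v → c u ≠ c v := by
    intro u v h heq
    have h2 := hc.2 u v h.ne heq
    have h3 : (starTree m).edist u v ≤ 1 := by
      have := SimpleGraph.edist_le (Walk.cons h Walk.nil)
      simpa using this
    have h4 : (c u : ℕ∞) < 1 := lt_of_lt_of_le h2 h3
    have := (hcpos u).1
    have : (1 : ℕ∞) ≤ (c u : ℕ∞) := by exact_mod_cast this
    exact absurd (lt_of_le_of_lt this h4) (lt_irrefl _)
  -- vertices at distance ≤ 2 with equal colors must have color 1
  have hdist2 : ∀ u v w, u ≠ v → (starTree m).Adj u w → (starTree m).Adj w v →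
      c u = c v → c u = 1 := by
    intro u v w huv h1 h2 heq
    have h3 := hc.2 u v huv heq
    have h4 : (starTree m).edist u v ≤ 2 := by
      have := SimpleGraph.edist_le (Walk.cons h1 (Walk.cons h2 Walk.nil))
      simpa using this
    have h5 : (c u : ℕ∞) < 2 := lt_of_lt_of_le h3 h4
    have h6 : c u < 2 := by exact_mod_cast h5
    have := (hcpos u).1
    omega
  -- middles are adjacent to the center
  have hmidadj : ∀ j : Fin m, (starTree m).Adj (some (j, none)) none :=
    fun j => (starTree_adj m).mpr ⟨by simp [parentFn], Or.inl rfl⟩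
  have hleafadj : ∀ j i, (starTree m).Adj (some (j, some i)) (some (j, none)) :=
    fun j i => (starTree_adj m).mpr ⟨by simp [parentFn], Or.inl rfl⟩
  have hcard : (Finset.Icc 2 m).card = m - 1 := by
    rw [Nat.card_Icc]; omega
  by_cases hB : ∃ j : Fin m, c (some (j, none)) = 1
  · obtain ⟨j₀, hj₀⟩ := hB
    -- all leaves of group j₀ have distinct colors in Icc 2 m
    have hmem : ∀ i : Fin m, c (some (j₀, some i)) ∈ Finset.Icc 2 m := by
      intro i
      have h1 := (hcpos (some (j₀, some i))).1
      have h2 := (hcpos (some (j₀, some i))).2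
      have hne1 : c (some (j₀, some i)) ≠ 1 := by
        intro h
        exact hadj_ne _ _ (hleafadj j₀ i) (h.trans hj₀.symm)
      simp only [Finset.mem_Icc]; omega
    have hinj : Function.Injective (fun i : Fin m => c (some (j₀, some i))) := by
      intro i i' heq
      by_contra hne
      have hne' : (some (j₀, some i) : StarV m) ≠ some (j₀, some i') := by
        simp [hne]
      have h1 := hdist2 _ _ (some (j₀, none)) hne' (hleafadj j₀ i)
        ((starTree m).adj_symm (hleafadj j₀ i')) heq
      have := (hmem i)
      simp only [Finset.mem_Icc] at this
      omega
    have hle := Finset.card_le_card_of_injOn (s := Finset.univ) (fun i : Fin m => c (some (j₀, some i)))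
      (fun i _ => hmem i) (fun i _ i' _ h => hinj h)
    simp only [Finset.card_univ, Fintype.card_fin, hcard] at hle
    omega
  · push_neg at hB
    have hmem : ∀ j : Fin m, c (some (j, none)) ∈ Finset.Icc 2 m := by
      intro j
      have h1 := (hcpos (some (j, none))).1
      have h2 := (hcpos (some (j, none))).2
      have hne1 := hB j
      simp only [Finset.mem_Icc]; omega
    have hinj : Function.Injective (fun j : Fin m => c (some (j, none))) := by
      intro j j' heq
      by_contra hne
      have hne' : (some (j, none) : StarV m) ≠ some (j', none) := by simp [hne]
      have h1 := hdist2 _ _ none hne' (hmidadj j) ((starTree m).adj_symm (hmidadj j')) heq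
      exact hB j h1
    have hle := Finset.card_le_card_of_injOn (s := Finset.univ) (fun j : Fin m => c (some (j, none)))
      (fun j _ => hmem j) (fun j _ j' _ h => hinj h)
    simp only [Finset.card_univ, Fintype.card_fin, hcard] at hle
    omega

end Star

section Leaf
variable {n : ℕ}

private lemma exists_leaf (G : SimpleGraph (Fin n)) (hG : G.IsTree) (hn : 2 ≤ n) :
    ∃ x y : Fin n, G.Adj x y ∧ ∀ z, G.Adj x z → z = y := by
  classical
  have hcard : Fintype.card (Fin n) = n := by simp
  have hdegpos : ∀ v : Fin n, 0 < G.degree v := by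
    intro v
    rw [SimpleGraph.degree_pos_iff_exists_adj]
    obtain ⟨u, hu⟩ := Fintype.exists_ne_of_one_lt_card (by omega) v
    obtain ⟨p⟩ := hG.isConnected v u
    cases p with
    | nil => exact absurd rfl (Ne.symm hu)
    | cons h q => exact ⟨_, h⟩
  have hsum : ∑ v, G.degree v = 2 * (n - 1) := by
    rw [SimpleGraph.sum_degrees_eq_twice_card_edges]
    have := hG.card_edgeFinset
    rw [hcard] at this
    omega
  by_contra hno
  push_neg at hno
  have hdeg2 : ∀ v : Fin n, 2 ≤ G.degree v := by
    intro v
    have h1 := hdegpos v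
    rcases Nat.lt_or_ge (G.degree v) 2 with h | h
    · -- degree = 1
      exfalso
      have hd1 : G.degree v = 1 := by omega
      obtain ⟨y, hy⟩ := Finset.card_eq_one.mp hd1
      have hadj : G.Adj v y := by
        have : y ∈ G.neighborFinset v := by rw [hy]; simp
        rwa [SimpleGraph.mem_neighborFinset] at this
      obtain ⟨z, hz1, hz2⟩ := hno v y hadj
      have : z ∈ G.neighborFinset v := by rwa [SimpleGraph.mem_neighborFinset]
      rw [hy] at this
      exact hz2 (Finset.mem_singleton.mp this)
    · exact h
  have hge : 2 * n ≤ ∑ v, G.degree v := by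
    calc 2 * n = ∑ _v : Fin n, 2 := by simp [Finset.sum_const, hcard, Nat.mul_comm]
    _ ≤ ∑ v, G.degree v := Finset.sum_le_sum fun v _ => hdeg2 v
  omega

private lemma edist_deleteVert_le {G : SimpleGraph (Fin n)} {x y : Fin n}
    (hxy : G.Adj x y) (huniq : ∀ z, G.Adj x z → z = y)
    {u v : Fin n} (hu : u ≠ x) (hv : v ≠ x) :
    (deleteVert G x).edist ⟨u, hu⟩ ⟨v, hv⟩ ≤ G.edist u v := by
  classical
  rw [SimpleGraph.edist_eq_sInf (G := G)]
  refine le_sInf ?_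
  rintro _ ⟨p, rfl⟩
  have hq : p.bypass.IsPath := p.bypass_isPath
  have hx : x ∉ p.bypass.support := by
    intro hxs
    obtain ⟨q₁, q₂, hsplit⟩ := Walk.mem_support_iff_exists_append.mp hxs
    have hnodup := hq.support_nodup
    rw [hsplit, Walk.support_append] at hnodup
    have hdisj := List.disjoint_of_nodup_append hnodup
    -- y appears in q₂.support.tail
    have hy2 : y ∈ q₂.support.tail := by
      cases q₂ with
      | nil => exact absurd rfl hv
      | @cons _ b _ hadj2 t =>
        have hb : b = y := huniq b hadj2
        have h1 : (Walk.cons hadj2 t).support.tail = t.support := by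
          simp [Walk.support_cons]
        rw [h1, ← hb]
        exact t.start_mem_support
    -- y appears in q₁.support
    have hy1 : y ∈ q₁.support := by
      cases hrev : q₁.reverse with
      | nil => exact absurd rfl hu
      | @cons _ b _ hadj3 t =>
        have hb : b = y := huniq b hadj3
        have hmem : b ∈ q₁.reverse.support := by rw [hrev]; simp
        rw [Walk.support_reverse, List.mem_reverse] at hmem
        exact hb ▸ hmem
    exact hdisj hy1 hy2
  have hsupp : ∀ w ∈ p.bypass.support, w ∈ {v : Fin n | v ≠ x} :=
    fun w hw hwx => hx (hwx ▸ hw)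
  obtain ⟨q', hq'⟩ := exists_walk_induce p.bypass hsupp hu hv
  calc (deleteVert G x).edist ⟨u, hu⟩ ⟨v, hv⟩ ≤ q'.length := SimpleGraph.edist_le q'
    _ = (p.bypass.length : ℕ∞) := by rw [hq']
    _ ≤ (p.length : ℕ∞) := by exact_mod_cast p.length_bypass_le

end Leaf

section Forest

private lemma subcard_lt {n : ℕ} (t : Set (Fin n)) [DecidablePred (· ∈ t)] (z : Fin n)
    (hz : z ∉ t) : Fintype.card t < n := by
  have h := Fintype.card_lt_of_injective_of_notMem (Subtype.val : t → Fin n)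
    Subtype.coe_injective (b := z) (by rintro ⟨⟨w, hw⟩, rfl⟩; exact hz hw)
  simpa using h

private lemma forest_lt {k n₀ : ℕ} (hk : 2 ≤ k)
    (hmin : ∀ m : ℕ, m < n₀ → ∀ H : SimpleGraph (Fin m), H.IsTree → packingChromatic H < k) :
    ∀ n, n < n₀ → ∀ H : SimpleGraph (Fin n), H.IsAcyclic → packingChromatic H < k := by
  intro n
  induction n using Nat.strong_induction_on with
  | _ n ih =>
    intro hn H hH
    classical
    by_cases hconn : H.Connected
    · exact hmin n hn H ⟨hconn, hH⟩
    rcases Nat.eq_zero_or_pos n with rfl | hpos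
    · have h0 : packingChromatic H ≤ 0 :=
        packingChromatic_le_of_exists ⟨fun v => 0, fun v => v.elim0, fun u _ _ _ => u.elim0⟩
      omega
    have hne : Nonempty (Fin n) := ⟨⟨0, hpos⟩⟩
    have hnp : ¬ H.Preconnected := fun hp => hconn ⟨hp⟩
    simp only [SimpleGraph.Preconnected, not_forall] at hnp
    obtain ⟨u₀, v₀, hr⟩ := hnp
    set s : Set (Fin n) := {w | H.Reachable w u₀} with hs
    have hclosed : ∀ u w, u ∈ s → H.Reachable u w → w ∈ s :=
      fun u w hu hr' => hr'.symm.trans hu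
    have hcclosed : ∀ u w, u ∈ sᶜ → H.Reachable u w → w ∈ sᶜ :=
      fun u w hu hr' hw => hu (hr'.trans hw)
    have hu₀ : u₀ ∈ s := Reachable.refl u₀
    have hv₀ : v₀ ∉ s := fun h => hr h.symm
    have hu₀c : u₀ ∉ sᶜ := fun h => h hu₀
    -- a general helper for the two parts
    have key : ∀ (t : Set (Fin n)), (∀ u w, u ∈ t → H.Reachable u w → w ∈ t) →
        (∃ z, z ∉ t) → packingChromatic (H.induce t) ≤ k - 1 := by
      intro t htcl hzt
      obtain ⟨z, hz⟩ := hzt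
      have hcard : Fintype.card t < n := subcard_lt t z hz
      let e := (Fintype.equivFin t).symm
      let H' := (H.induce t).comap e.toEmbedding
      have iso : H' ≃g H.induce t := Iso.comap e (H.induce t)
      have hH' : H'.IsAcyclic :=
        isAcyclic_of_embedding iso.toEmbedding (isAcyclic_of_embedding (induceEmbedding H t) hH)
      have hlt := ih _ hcard (lt_trans hcard hn) H' hH'
      rw [packingChromatic_iso iso] at hlt
      omega
    have hc1 := key s hclosed ⟨v₀, hv₀⟩
    have hc2 := key sᶜ hcclosed ⟨u₀, hu₀c⟩
    obtain ⟨c₁, hc₁⟩ := exists_packingColoring_of_le hc1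
    obtain ⟨c₂, hc₂⟩ := exists_packingColoring_of_le hc2
    have hglue : ∃ c, IsPackingColoring H (k - 1) c := by
      refine ⟨fun v => if h : v ∈ s then c₁ ⟨v, h⟩ else c₂ ⟨v, h⟩, fun v => ?_, ?_⟩
      · by_cases h : v ∈ s
        · simpa [h] using hc₁.1 ⟨v, h⟩
        · simpa [h] using hc₂.1 ⟨v, h⟩
      · intro u v huv heq
        by_cases hus : u ∈ s <;> by_cases hvs : v ∈ s
        · simp only [dif_pos hus, dif_pos hvs] at heq ⊢
          have h2 := hc₁.2 ⟨u, hus⟩ ⟨v, hvs⟩ (by simpa using huv) heq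
          exact lt_of_lt_of_le h2 (edist_induce_le hclosed hus hvs)
        · have hnr : ¬ H.Reachable u v := fun hruv => hvs (hclosed u v hus hruv)
          rw [SimpleGraph.edist_eq_top_of_not_reachable hnr]
          exact lt_top_iff_ne_top.mpr (ENat.coe_ne_top _)
        · have hnr : ¬ H.Reachable u v := fun hruv => hus ((hclosed v u hvs hruv.symm))
          rw [SimpleGraph.edist_eq_top_of_not_reachable hnr]
          exact lt_top_iff_ne_top.mpr (ENat.coe_ne_top _)
        · simp only [dif_neg hus, dif_neg hvs] at heq ⊢
          have h2 := hc₂.2 ⟨u, hus⟩ ⟨v, hvs⟩ (by simpa using huv) heq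
          exact lt_of_lt_of_le h2 (edist_induce_le hcclosed hus hvs)
    have := packingChromatic_le_of_exists hglue
    omega

end Forest


private lemma exists_tree_fin (k : ℕ) (hk : 2 ≤ k) :
    ∃ (n : ℕ) (G : SimpleGraph (Fin n)), G.IsTree ∧ k ≤ packingChromatic G := by
  classical
  set m := k - 1 with hm
  have hm1 : 1 ≤ m := by omega
  let e := (Fintype.equivFin (StarV m)).symm
  have iso : (starTree m).comap e.toEmbedding ≃g starTree m := Iso.comap e (starTree m)
  refine ⟨Fintype.card (StarV m), (starTree m).comap e.toEmbedding, ?_, ?_⟩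
  · constructor
    · exact (Iso.connected_iff iso).mpr (starTree_isTree m).isConnected
    · exact isAcyclic_of_embedding iso.toEmbedding (starTree_isTree m).IsAcyclic
  · rw [packingChromatic_iso iso]
    have := starTree_chi m hm1
    omega

/-- For every `k ≥ 2` there exists a `k`-`χρ`-critical tree. -/
theorem stmt_16 (k : ℕ) (hk : 2 ≤ k) :
    ∃ (n : ℕ) (G : SimpleGraph (Fin n)), G.IsTree ∧
      packingChromatic G = k ∧
      ∀ x : Fin n, packingChromatic (deleteVert G x) < k := by
  classical
  obtain ⟨n₁, G₁, hT₁, hk₁⟩ := exists_tree_fin k hk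
  set S : Set ℕ := {n | ∃ G : SimpleGraph (Fin n), G.IsTree ∧ k ≤ packingChromatic G} with hS
  have hSne : S.Nonempty := ⟨n₁, G₁, hT₁, hk₁⟩
  set n₀ := sInf S with hn₀
  obtain ⟨G, hT, hχ⟩ : ∃ G : SimpleGraph (Fin n₀), G.IsTree ∧ k ≤ packingChromatic G :=
    Nat.sInf_mem hSne
  have hmin : ∀ m, m < n₀ → ∀ H : SimpleGraph (Fin m), H.IsTree → packingChromatic H < k := by
    intro m hm H hH
    by_contra h
    push_neg at h
    exact Nat.notMem_of_lt_sInf hm ⟨H, hH, h⟩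
  have hforest := forest_lt hk hmin
  have claim2 : ∀ x : Fin n₀, packingChromatic (deleteVert G x) < k := by
    intro x
    have hcard : Fintype.card {v : Fin n₀ | v ≠ x} < n₀ :=
      subcard_lt {v : Fin n₀ | v ≠ x} x (by simp)
    let e := (Fintype.equivFin {v : Fin n₀ | v ≠ x}).symm
    let H' := (deleteVert G x).comap e.toEmbedding
    have iso : H' ≃g deleteVert G x := Iso.comap e (deleteVert G x)
    have hH' : H'.IsAcyclic :=
      isAcyclic_of_embedding iso.toEmbedding
        (isAcyclic_of_embedding (induceEmbedding G {v : Fin n₀ | v ≠ x}) hT.IsAcyclic)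
    have := hforest _ hcard H' hH'
    rwa [packingChromatic_iso iso] at this
  have hn₀pos : 0 < n₀ := by
    rcases Nat.eq_zero_or_pos n₀ with h0 | h
    · exfalso
      have := hT.isConnected.nonempty
      rw [h0] at this
      obtain ⟨w⟩ := this
      exact w.elim0
    · exact h
  have hn₀2 : 2 ≤ n₀ := by
    by_contra h
    push_neg at h
    have hsub : Subsingleton (Fin n₀) := by
      apply Fintype.card_le_one_iff_subsingleton.mp
      simpa using Nat.lt_succ_iff.mp h
    have h1 : packingChromatic G ≤ 1 :=
      packingChromatic_le_of_exists ⟨fun _ => 1, fun v => by simp,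
        fun u v huv _ => absurd (Subsingleton.elim u v) huv⟩
    omega
  obtain ⟨x, y, hxy, huniq⟩ := exists_leaf G hT hn₀2
  have hle : packingChromatic (deleteVert G x) ≤ k - 1 := by
    have := claim2 x
    omega
  obtain ⟨c₀, hc₀⟩ := exists_packingColoring_of_le hle
  have hchi_le : packingChromatic G ≤ k := by
    refine packingChromatic_le_of_exists
      ⟨fun v => if h : v = x then k else c₀ ⟨v, h⟩, fun v => ?_, ?_⟩
    · by_cases h : v = x
      · simp only [dif_pos h, Finset.mem_Icc]
        omega
      · simp only [dif_neg h]
        have := hc₀.1 ⟨v, h⟩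
        simp only [Finset.mem_Icc] at this ⊢
        omega
    · intro u v huv heq
      dsimp only at heq ⊢
      have hbound : ∀ w (hw : w ≠ x), c₀ ⟨w, hw⟩ ≤ k - 1 := by
        intro w hw
        have := hc₀.1 ⟨w, hw⟩
        simp only [Finset.mem_Icc] at this
        omega
      by_cases hux : u = x
      · exfalso
        have hvx : v ≠ x := fun h => huv (hux.trans h.symm)
        rw [dif_pos hux, dif_neg hvx] at heq
        have := hbound v hvx
        omega
      · by_cases hvx : v = x
        · exfalso
          rw [dif_pos hvx, dif_neg hux] at heq
          have := hbound u hux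
          omega
        · rw [dif_neg hux, dif_neg hvx] at heq
          rw [dif_neg hux]
          have h2 := hc₀.2 ⟨u, hux⟩ ⟨v, hvx⟩ (by simpa using huv) heq
          exact lt_of_lt_of_le h2 (edist_deleteVert_le hxy huniq hux hvx)
  exact ⟨n₀, G, hT, le_antisymm hchi_le hχ, claim2⟩
end

section
/- Every caterpillar T satisfies χρ(T) ≤ 7. -/
open SimpleGraph

private def patL : List ℕ := [2,4,3,2,5,6,2,4,3,2,5,7]

private def pat (n : ℕ) : ℕ := patL.getD (n % 12) 0

private lemma pat_bounds (n : ℕ) : 2 ≤ pat n ∧ pat n ≤ 7 := by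
  have h : n % 12 < 12 := Nat.mod_lt _ (by norm_num)
  unfold pat
  set r := n % 12 with hr
  interval_cases r <;> decide

private lemma pat_key : ∀ r < 12, ∀ d < 8, 1 ≤ d →
    patL.getD r 0 = patL.getD ((r + d) % 12) 0 → patL.getD r 0 < d := by decide

private lemma pat_spec {i j : ℕ} (h : i < j) (hp : pat i = pat j) : pat i < j - i := by
  rcases le_or_gt 8 (j - i) with h8 | h8
  · have := (pat_bounds i).2; omega
  · set d := j - i with hd
    have hd1 : 1 ≤ d := by omega
    have hj : j = i + d := by omega
    have hpj : pat j = patL.getD ((i % 12 + d) % 12) 0 := by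
      unfold pat
      rw [hj, Nat.add_mod, Nat.mod_eq_of_lt (show d < 12 by omega)]
    have hkey := pat_key (i % 12) (Nat.mod_lt _ (by norm_num)) d h8 hd1
    have hpi : pat i = patL.getD (i % 12) 0 := rfl
    rw [hpi, hpj] at hp
    rw [hpi]
    exact hkey hp

private lemma pg_walk (m : ℕ) : ∀ d (i j : Fin m), (j : ℕ) = i + d →
    ∃ p : (pathGraph m).Walk i j, p.IsPath ∧ p.length = d ∧ ∀ x ∈ p.support, (i : ℕ) ≤ x := by
  intro d
  induction d with
  | zero =>
    intro i j hj
    have hij : i = j := Fin.ext (by omega)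
    subst hij
    exact ⟨.nil, .nil, rfl, by simp⟩
  | succ d ih =>
    intro i j hj
    have hlt : (i : ℕ) + 1 < m := by have := j.isLt; omega
    set i' : Fin m := ⟨i + 1, hlt⟩ with hi'
    obtain ⟨q, hq, hlen, hsupp⟩ := ih i' j (by simp only [hi']; omega)
    have hadj : (pathGraph m).Adj i i' := by
      rw [pathGraph_adj]; left; simp [hi']
    have hns : i ∉ q.support := by
      intro hx
      have := hsupp i hx
      simp only [hi'] at this
      omega
    refine ⟨q.cons hadj, hq.cons hns, by simp [hlen], ?_⟩
    intro x hx
    rw [SimpleGraph.Walk.support_cons] at hx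
    rcases List.mem_cons.mp hx with hx | hx
    · exact le_of_eq (by rw [hx])
    · have := hsupp x hx
      simp only [hi'] at this
      omega

private lemma spine_edist {V : Type*} [DecidableEq V] {T : SimpleGraph V} (hT : T.IsTree) {m : ℕ}
    (f : pathGraph m →g T) (hf : Function.Injective f) (i j : Fin m) (hij : (i : ℕ) ≤ j) :
    (((j : ℕ) - (i : ℕ) : ℕ) : ℕ∞) ≤ T.edist (f i) (f j) := by
  obtain ⟨q, hq, hlen, -⟩ := pg_walk m ((j : ℕ) - i) i j (by omega)
  have hP : (q.map f).IsPath := q.map_isPath_of_injective hf hq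
  obtain ⟨w, hw⟩ := hT.isConnected.exists_walk_length_eq_edist (f i) (f j)
  rw [← hw]
  have hbp : w.bypass = q.map f :=
    (hT.existsUnique_path (f i) (f j)).unique w.bypass_isPath hP
  have h1 := SimpleGraph.Walk.length_bypass_le w
  rw [hbp, SimpleGraph.Walk.length_map, hlen] at h1
  exact_mod_cast h1

/-- In a connected graph, if `u`'s only neighbor is `v` and vice versa, then
every walk starting at `u` or `v` ends at `u` or `v`. -/
private lemma trapped {V : Type*} {T : SimpleGraph V} {u v : V}
    (hA : ∀ x, T.Adj u x → x = v) (hB : ∀ x, T.Adj v x → x = u) :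
    ∀ {a w : V} (_ : T.Walk a w), (a = u ∨ a = v) → (w = u ∨ w = v) := by
  intro a w p
  induction p with
  | nil => exact id
  | @cons a b w hab p ih =>
    rintro (rfl | rfl)
    · exact ih (Or.inr (hA b hab))
    · exact ih (Or.inl (hB b hab))

/-- Every caterpillar `T` (a tree having a path containing every vertex of
degree at least `2`) satisfies `χρ(T) ≤ 7`. -/
theorem stmt_17 {V : Type*} [Fintype V] (T : SimpleGraph V) [DecidableRel T.Adj]
    (hT : T.IsTree) (m : ℕ) (f : pathGraph m →g T) (hf : Function.Injective f)
    (hspine : ∀ v : V, 2 ≤ T.degree v → v ∈ Set.range f) :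
    packingChromatic T ≤ 7 := by
  classical
  apply Nat.sInf_le
  rcases le_or_gt (Fintype.card V) 7 with hcard | hcard
  · -- small case: injective coloring
    refine ⟨fun v => (Fintype.equivFin V v : ℕ) + 1, ?_, ?_⟩
    · intro v
      have := (Fintype.equivFin V v).isLt
      simp only [Finset.mem_Icc]
      omega
    · intro u v huv hcuv
      exfalso
      apply huv
      simp only at hcuv
      have : Fintype.equivFin V u = Fintype.equivFin V v := Fin.ext (by omega)
      exact (Fintype.equivFin V).injective this
  · -- main construction
    set c : V → ℕ :=
      fun v => if h : ∃ i : Fin m, f i = v then pat ((h.choose : Fin m) : ℕ) else 1 with hc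
    have hcf : ∀ i : Fin m, c (f i) = pat (i : ℕ) := by
      intro i
      have h : ∃ k : Fin m, f k = f i := ⟨i, rfl⟩
      simp only [hc, dif_pos h]
      congr 2
      exact hf h.choose_spec
    have hleaf : ∀ v : V, (¬∃ i : Fin m, f i = v) → c v = 1 := by
      intro v hv; simp only [hc, dif_neg hv]
    -- auxiliary: two spine vertices with same pattern color
    have haux : ∀ i j : Fin m, (i : ℕ) < j → pat (i : ℕ) = pat (j : ℕ) →
        ((pat (i : ℕ) : ℕ∞)) < T.edist (f i) (f j) := by
      intro i j hij hp
      have h1 : pat (i : ℕ) < (j : ℕ) - i := pat_spec hij hp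
      have h2 := spine_edist hT f hf i j (le_of_lt hij)
      exact lt_of_lt_of_le (by exact_mod_cast h1) h2
    refine ⟨c, ?_, ?_⟩
    · intro v
      by_cases h : ∃ i : Fin m, f i = v
      · obtain ⟨i, rfl⟩ := h
        rw [hcf i]
        have := pat_bounds (i : ℕ)
        simp only [Finset.mem_Icc]
        omega
      · rw [hleaf v h]; simp
    · intro u v huv hcc
      by_cases hu : ∃ i : Fin m, f i = u <;> by_cases hv : ∃ j : Fin m, f j = v
      · -- both on spine
        obtain ⟨i, rfl⟩ := hu
        obtain ⟨j, rfl⟩ := hv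
        rw [hcf i, hcf j] at hcc
        rw [hcf i]
        have hij : i ≠ j := fun h => huv (by rw [h])
        rcases lt_trichotomy ((i : ℕ)) ((j : ℕ)) with h | h | h
        · exact haux i j h hcc
        · exact absurd (Fin.ext h) hij
        · rw [T.edist_comm, hcc]
          exact haux j i h hcc.symm
      · -- spine and leaf: colors differ
        exfalso
        obtain ⟨i, rfl⟩ := hu
        rw [hcf i, hleaf v hv] at hcc
        have := (pat_bounds (i : ℕ)).1
        omega
      · exfalso
        obtain ⟨j, rfl⟩ := hv
        rw [hcf j, hleaf u hu] at hcc
        have := (pat_bounds (j : ℕ)).1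
        omega
      · -- two leaves: need edist > 1, i.e. not adjacent
        rw [hleaf u hu]
        have hpos : 0 < T.edist u v := T.edist_pos_of_ne huv
        have hne1 : T.edist u v ≠ 1 := by
          intro h1
          have hadj : T.Adj u v := SimpleGraph.edist_eq_one_iff_adj.mp h1
          -- u and v are leaves
          have hdu : T.degree u ≤ 1 := by
            by_contra h
            exact hu (Set.mem_range.mp (hspine u (by omega)))
          have hdv : T.degree v ≤ 1 := by
            by_contra h
            exact hv (Set.mem_range.mp (hspine v (by omega)))
          have hA : ∀ x, T.Adj u x → x = v := by
            intro x hx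
            by_contra hxv
            have hsub : ({v, x} : Finset V) ⊆ T.neighborFinset u := by
              intro y hy
              simp only [Finset.mem_insert, Finset.mem_singleton] at hy
              rcases hy with rfl | rfl
              · exact (T.mem_neighborFinset u y).mpr hadj
              · exact (T.mem_neighborFinset u y).mpr hx
            have h2 : 2 ≤ T.degree u := by
              rw [← Finset.card_pair (Ne.symm hxv)]
              exact Finset.card_le_card hsub
            omega
          have hB : ∀ x, T.Adj v x → x = u := by
            intro x hx
            by_contra hxu
            have hsub : ({u, x} : Finset V) ⊆ T.neighborFinset v := by
              intro y hy
              simp only [Finset.mem_insert, Finset.mem_singleton] at hy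
              rcases hy with rfl | rfl
              · exact (T.mem_neighborFinset v y).mpr hadj.symm
              · exact (T.mem_neighborFinset v y).mpr hx
            have h2 : 2 ≤ T.degree v := by
              rw [← Finset.card_pair (Ne.symm hxu)]
              exact Finset.card_le_card hsub
            omega
          -- third vertex exists since card ≥ 8
          have hthird : ∃ w : V, w ≠ u ∧ w ≠ v := by
            by_contra hno
            push_neg at hno
            have hsub : (Finset.univ : Finset V) ⊆ {u, v} := by
              intro w _
              simp only [Finset.mem_insert, Finset.mem_singleton]
              by_cases h : w = u
              · exact Or.inl h
              · exact Or.inr (hno w h)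
            have := Finset.card_le_card hsub
            have h2 : ({u, v} : Finset V).card ≤ 2 := Finset.card_insert_le _ _ |>.trans (by simp)
            simp only [Finset.card_univ] at this
            omega
          obtain ⟨w, hwu, hwv⟩ := hthird
          obtain ⟨p⟩ := hT.isConnected u w
          rcases trapped hA hB p (Or.inl rfl) with h | h
          · exact hwu h
          · exact hwv h
        -- edist > 1
        have : (1 : ℕ∞) < T.edist u v := by
          rcases (ENat.one_le_iff_ne_zero.mpr (by exact_mod_cast hpos.ne')).lt_or_eq with h | h
          · exact h
          · exact absurd h.symm hne1
        exact_mod_cast this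
end
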